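/- arXiv:1309.3297 — 16 statements merged into one kernel-verified Lean document; each statement's English description precedes it below -/
import Mathlib

section
/- If a finite union-closed family A contains a two-element set {x, y}, then x or y is abundant: at least one of x, y lies in at least |A|/2 member-sets of A. -/
theorem two_set_abundant {α : Type*} [DecidableEq α]
    (A : Finset (Finset α))
    (hUC : ∀ B ∈ A, ∀ C ∈ A, B ∪ C ∈ A)
    (x y : α) (hxy : ({x, y} : Finset α) ∈ A) :
    2 * (A.filter (fun S => x ∈ S)).card ≥ A.card ∨
    2 * (A.filter (fun S => y ∈ S)).card ≥ A.card := by
  classical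
  set Nf := A.filter (fun S => x ∉ S ∧ y ∉ S) with hNf
  set Cf := A.filter (fun S => x ∈ S ∧ y ∈ S) with hCf
  set AX := A.filter (fun S => x ∈ S ∧ y ∉ S) with hAX
  set AY := A.filter (fun S => x ∉ S ∧ y ∈ S) with hAY
  have key : Nf.card ≤ Cf.card := by
    apply Finset.card_le_card_of_injOn (fun S => S ∪ {x, y})
    · intro S hS
      simp only [hNf, Finset.mem_coe, Finset.mem_filter] at hS
      simp only [hCf, Finset.mem_coe, Finset.mem_filter]
      refine ⟨hUC S hS.1 _ hxy, ?_, ?_⟩ <;> simp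
    · intro S hS T hT h
      simp only [hNf, Finset.mem_coe, Finset.mem_filter] at hS hT
      simp only [] at h
      ext a
      constructor
      · intro ha
        have : a ∈ T ∪ {x, y} := h ▸ Finset.mem_union_left _ ha
        rcases Finset.mem_union.mp this with h' | h'
        · exact h'
        · simp only [Finset.mem_insert, Finset.mem_singleton] at h'
          rcases h' with rfl | rfl
          · exact absurd ha hS.2.1
          · exact absurd ha hS.2.2
      · intro ha
        have : a ∈ S ∪ {x, y} := h ▸ Finset.mem_union_left _ ha
        rcases Finset.mem_union.mp this with h' | h'
        · exact h'
        · simp only [Finset.mem_insert, Finset.mem_singleton] at h'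
          rcases h' with rfl | rfl
          · exact absurd ha hT.2.1
          · exact absurd ha hT.2.2
  have h1 : (A.filter (fun S => x ∈ S)).card = Cf.card + AX.card := by
    rw [hCf, hAX]
    rw [show A.filter (fun S => x ∈ S ∧ y ∈ S)
        = (A.filter (fun S => x ∈ S)).filter (fun S => y ∈ S) by
      rw [Finset.filter_filter]]
    rw [show A.filter (fun S => x ∈ S ∧ y ∉ S)
        = (A.filter (fun S => x ∈ S)).filter (fun S => ¬ y ∈ S) by
      rw [Finset.filter_filter]]
    rw [Finset.card_filter_add_card_filter_not]
  have h2 : (A.filter (fun S => y ∈ S)).card = Cf.card + AY.card := by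
    rw [hCf, hAY]
    rw [show A.filter (fun S => x ∈ S ∧ y ∈ S)
        = (A.filter (fun S => y ∈ S)).filter (fun S => x ∈ S) by
      rw [Finset.filter_filter]; apply Finset.filter_congr; intro S _; tauto]
    rw [show A.filter (fun S => x ∉ S ∧ y ∈ S)
        = (A.filter (fun S => y ∈ S)).filter (fun S => ¬ x ∈ S) by
      rw [Finset.filter_filter]; apply Finset.filter_congr; intro S _; tauto]
    rw [Finset.card_filter_add_card_filter_not]
  have h3 : A.card = (A.filter (fun S => x ∈ S)).card + (AY.card + Nf.card) := by
    rw [hAY, hNf]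
    rw [show A.filter (fun S => x ∉ S ∧ y ∈ S)
        = (A.filter (fun S => ¬ x ∈ S)).filter (fun S => y ∈ S) by
      rw [Finset.filter_filter]]
    rw [show A.filter (fun S => x ∉ S ∧ y ∉ S)
        = (A.filter (fun S => ¬ x ∈ S)).filter (fun S => ¬ y ∈ S) by
      rw [Finset.filter_filter]]
    rw [Finset.card_filter_add_card_filter_not,
      Finset.card_filter_add_card_filter_not]
  omega
end

section
/- Any finite union-closed family A with n ≥ 2 member-sets (containing at least one nonempty set) has an element that is contained in at least (n-1)/log₂(n) member-sets. -/
open Finset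

section KnillAux

variable {α : Type*} [DecidableEq α]

/-- The union of all members of a nonempty union-closed family is a member. -/
private lemma sup_mem_uc (A : Finset (Finset α))
    (hUC : ∀ B ∈ A, ∀ C ∈ A, B ∪ C ∈ A) (hne : A.Nonempty) : A.sup id ∈ A := by
  classical
  have H : ∀ B : Finset (Finset α), B ⊆ A → B.Nonempty → B.sup id ∈ A := by
    intro B
    induction B using Finset.induction_on with
    | empty => intro _ h; exact absurd h (by simp)
    | @insert a B ha ih =>
      intro hsub hne2
      rw [Finset.sup_insert]
      have haA : a ∈ A := hsub (mem_insert_self a B)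
      rcases B.eq_empty_or_nonempty with hB | hB
      · subst hB; simpa using haA
      · have hBA : B ⊆ A := (Finset.subset_insert a B).trans hsub
        have hsup : B.sup id ∈ A := ih hBA hB
        have := hUC a haA (B.sup id) hsup
        simpa [Finset.sup_eq_union] using this
  exact H A Finset.Subset.rfl hne

/-- Key hitting lemma: a union-closed family `A` with a designated minimal member `E₀`
admits a set `T` with `2 ^ |T| ≤ |A|` meeting every member other than `E₀`. -/
private lemma hit_lemma :
    ∀ (n : ℕ) (A : Finset (Finset α)), A.card ≤ n →
      (∀ B ∈ A, ∀ C ∈ A, B ∪ C ∈ A) →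
      ∀ E₀ ∈ A, (∀ S ∈ A, S ⊆ E₀ → S = E₀) →
      ∃ T : Finset α, 2 ^ T.card ≤ A.card ∧ ∀ S ∈ A, S ≠ E₀ → (S ∩ T).Nonempty := by
  intro n
  induction n with
  | zero =>
    intro A hcard _ E₀ hE₀ _
    have : A = ∅ := Finset.card_eq_zero.mp (Nat.le_zero.mp hcard)
    simp [this] at hE₀
  | succ n ih =>
    intro A hcard hUC E₀ hE₀ hmin
    classical
    set U := A.sup id with hUdef
    have hUA : U ∈ A := sup_mem_uc A hUC ⟨E₀, hE₀⟩
    have hSU : ∀ S ∈ A, S ⊆ U := fun S hS => Finset.le_sup (f := id) hS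
    have hA1 : 1 ≤ A.card := Finset.card_pos.mpr ⟨E₀, hE₀⟩
    by_cases hEU : E₀ = U
    · refine ⟨∅, by simpa using hA1, ?_⟩
      intro S hS hne
      exact absurd (hmin S hS (hEU ▸ hSU S hS)) hne
    · -- maximal members over a given member
      have exmax : ∀ Y ∈ A, Y ≠ U → ∃ M, M ∈ A ∧ Y ⊆ M ∧ M ≠ U ∧
          ∀ S ∈ A, M ⊆ S → S = M ∨ S = U := by
        intro Y hY hYU
        have hYF : Y ∈ A.filter (fun S => Y ⊆ S ∧ S ≠ U) :=
          mem_filter.mpr ⟨hY, Finset.Subset.rfl, hYU⟩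
        obtain ⟨M, hMF, hmax⟩ : ∃ M ∈ A.filter (fun S => Y ⊆ S ∧ S ≠ U),
            ∀ x ∈ A.filter (fun S => Y ⊆ S ∧ S ≠ U), ¬ M < x := by
          obtain ⟨M, hM⟩ := Finset.exists_maximal ⟨Y, hYF⟩
          exact ⟨M, hM.1, fun x hx hlt => lt_irrefl _ (lt_of_lt_of_le hlt (hM.2 hx hlt.le))⟩
        rw [mem_filter] at hMF
        obtain ⟨hMA, hYM, hMU⟩ := hMF
        refine ⟨M, hMA, hYM, hMU, ?_⟩
        intro S hS hMS
        by_cases hSU2 : S = U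
        · exact Or.inr hSU2
        · left
          have hSF : S ∈ A.filter (fun S => Y ⊆ S ∧ S ≠ U) :=
            mem_filter.mpr ⟨hS, hYM.trans hMS, hSU2⟩
          have hnlt := hmax S hSF
          by_contra hne
          exact hnlt (Finset.ssubset_iff_subset_ne.mpr ⟨hMS, fun h => hne h.symm⟩)
      -- the coatom dichotomy (all-or-nothing)
      have key : ∀ M, M ∈ A → M ≠ U → (∀ S ∈ A, M ⊆ S → S = M ∨ S = U) →
          ∀ S ∈ A, S ⊆ M ∨ U \ M ⊆ S := by
        intro M hMA hMU hmax S hS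
        rcases hmax (S ∪ M) (hUC S hS M hMA) Finset.subset_union_right with h | h
        · left; rw [← h]; exact Finset.subset_union_left
        · right
          intro x hx
          rw [Finset.mem_sdiff] at hx
          have hxU : x ∈ S ∪ M := by rw [h]; exact hx.1
          rcases Finset.mem_union.mp hxU with h2 | h2
          · exact h2
          · exact absurd h2 hx.2
      by_cases hB : ∀ M, M ∈ A → E₀ ⊆ M → M ≠ U →
          (∀ S ∈ A, M ⊆ S → S = M ∨ S = U) → (U \ M ∈ A ∨ E₀ ∪ (U \ M) ∈ A)
      · -- CASE B : transversal process
        have Q : ∀ (m : ℕ) (Y : Finset α), Y ∈ A → E₀ ⊆ Y → (U \ Y).card ≤ m →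
            ∃ (T : Finset α) (B : Finset (Finset α)), B ⊆ A ∧
              (∀ C ∈ B, E₀ ⊆ C ∧ C ⊆ E₀ ∪ (U \ Y)) ∧
              2 ^ T.card ≤ B.card ∧ (∀ S ∈ A, S ∩ T = ∅ → S ⊆ Y) := by
          intro m
          induction m with
          | zero =>
            intro Y hY hEY hc
            have hYU : Y = U := by
              have h0 : U \ Y = ∅ := Finset.card_eq_zero.mp (Nat.le_zero.mp hc)
              have hUY : U ⊆ Y := by
                intro x hx
                by_contra hxY
                have : x ∈ U \ Y := Finset.mem_sdiff.mpr ⟨hx, hxY⟩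
                rw [h0] at this
                exact absurd this (Finset.notMem_empty x)
              exact Finset.Subset.antisymm (hSU Y hY) hUY
            refine ⟨∅, {E₀}, by simpa using hE₀, ?_, by simp, ?_⟩
            · intro C hC
              rw [Finset.mem_singleton] at hC
              subst hC
              exact ⟨Finset.Subset.rfl, Finset.subset_union_left⟩
            · intro S hS _
              rw [hYU]; exact hSU S hS
          | succ m ihm =>
            intro Y hY hEY hc
            by_cases hYU : Y = U
            · refine ⟨∅, {E₀}, by simpa using hE₀, ?_, by simp, ?_⟩
              · intro C hC
                rw [Finset.mem_singleton] at hC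
                subst hC
                exact ⟨Finset.Subset.rfl, Finset.subset_union_left⟩
              · intro S hS _
                rw [hYU]; exact hSU S hS
            · obtain ⟨M, hMA, hYM, hMU, hmax⟩ := exmax Y hY hYU
              set W := U \ M with hWdef
              have hWne : W.Nonempty := Finset.sdiff_nonempty.mpr
                (fun h => hMU (Finset.Subset.antisymm (hSU M hMA) h))
              have hEM : E₀ ⊆ M := hEY.trans hYM
              have hWM : Disjoint W M := Finset.sdiff_disjoint
              have hWY : Disjoint W Y := hWM.mono_right hYM
              have hWU : W ⊆ U := Finset.sdiff_subset
              have hWsub : W ⊆ U \ Y := by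
                intro x hx
                exact Finset.mem_sdiff.mpr ⟨hWU hx, Finset.disjoint_left.mp hWY hx⟩
              obtain ⟨Z, hZA, hWZ, hZE⟩ : ∃ Z, Z ∈ A ∧ W ⊆ Z ∧ Z ⊆ E₀ ∪ W := by
                rcases hB M hMA hEM hMU hmax with h | h
                · exact ⟨W, h, Finset.Subset.rfl, Finset.subset_union_right⟩
                · exact ⟨E₀ ∪ W, h, Finset.subset_union_right, Finset.Subset.rfl⟩
              have hY'A : Y ∪ Z ∈ A := hUC Y hY Z hZA
              have hYW : Y ∪ Z = Y ∪ W := by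
                apply Finset.Subset.antisymm
                · intro x hx
                  rcases Finset.mem_union.mp hx with h2 | h2
                  · exact Finset.mem_union_left _ h2
                  · rcases Finset.mem_union.mp (hZE h2) with h3 | h3
                    · exact Finset.mem_union_left _ (hEY h3)
                    · exact Finset.mem_union_right _ h3
                · exact Finset.union_subset Finset.subset_union_left
                    (hWZ.trans Finset.subset_union_right)
              obtain ⟨w, hwW⟩ := hWne
              have hwU : w ∈ U := hWU hwW
              have hwY : w ∉ Y := Finset.disjoint_left.mp hWY hwW
              have hsub : U \ (Y ∪ Z) ⊆ U \ Y :=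
                Finset.sdiff_subset_sdiff Finset.Subset.rfl Finset.subset_union_left
              have hwin : w ∈ U \ Y := Finset.mem_sdiff.mpr ⟨hwU, hwY⟩
              have hwout : w ∉ U \ (Y ∪ Z) := by
                rw [Finset.mem_sdiff]
                push_neg
                intro _
                rw [hYW]
                exact Finset.mem_union_right _ hwW
              have hclt : (U \ (Y ∪ Z)).card < (U \ Y).card :=
                Finset.card_lt_card ((Finset.ssubset_iff_of_subset hsub).mpr ⟨w, hwin, hwout⟩)
              obtain ⟨T', B', hB'A, hB'prop, hB'card, hB'hits⟩ :=
                ihm (Y ∪ Z) hY'A (hEY.trans Finset.subset_union_left) (by omega)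
              -- no member of B' meets W
              have hWnotin : ∀ x ∈ W, ∀ C ∈ B', x ∉ C := by
                intro x hxW C hC hxC
                rcases Finset.mem_union.mp ((hB'prop C hC).2 hxC) with h | h
                · exact (Finset.disjoint_left.mp hWY hxW) (hEY h)
                · have hx2 := Finset.mem_sdiff.mp h
                  exact hx2.2 (by rw [hYW]; exact Finset.mem_union_right _ hxW)
              refine ⟨insert w T', B' ∪ B'.image (· ∪ Z), ?_, ?_, ?_, ?_⟩
              · apply Finset.union_subset hB'A
                intro C hC
                obtain ⟨C', hC', rfl⟩ := Finset.mem_image.mp hC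
                exact hUC C' (hB'A hC') Z hZA
              · intro C hC
                rcases Finset.mem_union.mp hC with h | h
                · obtain ⟨h1, h2⟩ := hB'prop C h
                  exact ⟨h1, h2.trans (Finset.union_subset_union Finset.Subset.rfl hsub)⟩
                · obtain ⟨C', hC', rfl⟩ := Finset.mem_image.mp h
                  obtain ⟨h1, h2⟩ := hB'prop C' hC'
                  constructor
                  · exact h1.trans Finset.subset_union_left
                  · apply Finset.union_subset
                    · exact h2.trans (Finset.union_subset_union Finset.Subset.rfl hsub)
                    · refine hZE.trans (Finset.union_subset_union Finset.Subset.rfl hWsub)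
              · -- cardinality: the two copies are disjoint and the image is injective
                have hdisj : Disjoint B' (B'.image (· ∪ Z)) := by
                  rw [Finset.disjoint_left]
                  intro C hC hCim
                  obtain ⟨C', _, hCe⟩ := Finset.mem_image.mp hCim
                  apply hWnotin w hwW C hC
                  rw [← hCe]
                  exact Finset.mem_union_right _ (hWZ hwW)
                have hinj : Set.InjOn (· ∪ Z) ↑B' := by
                  intro C₁ h1 C₂ h2 he
                  simp only [Finset.mem_coe] at h1 h2
                  have he' : C₁ ∪ Z = C₂ ∪ Z := he
                  apply Finset.ext
                  intro x
                  by_cases hxZ : x ∈ Z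
                  · rcases Finset.mem_union.mp (hZE hxZ) with h | h
                    · simp [(hB'prop C₁ h1).1 h, (hB'prop C₂ h2).1 h]
                    · simp [hWnotin x h C₁ h1, hWnotin x h C₂ h2]
                  · constructor
                    · intro hx
                      have : x ∈ C₁ ∪ Z := Finset.mem_union_left _ hx
                      rw [he'] at this
                      rcases Finset.mem_union.mp this with h | h
                      · exact h
                      · exact absurd h hxZ
                    · intro hx
                      have : x ∈ C₂ ∪ Z := Finset.mem_union_left _ hx
                      rw [← he'] at this
                      rcases Finset.mem_union.mp this with h | h
                      · exact h
                      · exact absurd h hxZ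
                have hcards : (B' ∪ B'.image (· ∪ Z)).card = B'.card + B'.card := by
                  rw [Finset.card_union_of_disjoint hdisj, Finset.card_image_of_injOn hinj]
                rw [hcards]
                have h1 : (insert w T').card ≤ T'.card + 1 := Finset.card_insert_le w T'
                have h2 : 2 ^ (insert w T').card ≤ 2 ^ (T'.card + 1) :=
                  Nat.pow_le_pow_right (by norm_num) h1
                have h3 : 2 ^ (T'.card + 1) = 2 ^ T'.card + 2 ^ T'.card := by ring
                omega
              · -- hitting property
                intro S hS hST
                have h1 : S ∩ T' = ∅ := by
                  apply Finset.subset_empty.mp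
                  rw [← hST]
                  exact Finset.inter_subset_inter Finset.Subset.rfl (Finset.subset_insert w T')
                have hwS : w ∉ S := by
                  intro h
                  have : w ∈ S ∩ insert w T' :=
                    Finset.mem_inter.mpr ⟨h, Finset.mem_insert_self _ _⟩
                  rw [hST] at this
                  exact absurd this (Finset.notMem_empty w)
                have hSY' : S ⊆ Y ∪ Z := hB'hits S hS h1
                rcases key M hMA hMU hmax S hS with h | h
                · intro x hxS
                  have := hSY' hxS
                  rw [hYW] at this
                  rcases Finset.mem_union.mp this with h2 | h2
                  · exact h2
                  · exact absurd (h hxS) (Finset.disjoint_left.mp hWM h2)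
                · exact absurd (h hwW) hwS
        obtain ⟨T, Bf, hBA, _, hcardT, hhits⟩ := Q (U \ E₀).card E₀ hE₀ Finset.Subset.rfl le_rfl
        refine ⟨T, le_trans hcardT (Finset.card_le_card hBA), ?_⟩
        intro S hS hne
        by_contra h
        have h0 : S ∩ T = ∅ := Finset.not_nonempty_iff_eq_empty.mp h
        exact hne (hmin S hS (hhits S hS h0))
      · -- CASE A : recursion into the trace family below a clean coatom
        push_neg at hB
        obtain ⟨M, hMA, hEM, hMU, hmax, hWA, hEWA⟩ := hB
        set W := U \ M with hWdef
        set D := A.filter (fun S => S ⊆ M) with hDdef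
        set P := A.filter (fun S => ¬ S ⊆ M) with hPdef
        set G := P.image (fun S => S ∩ M) with hGdef
        set H := D ∪ G with hHdef
        have hMU' : M ⊆ U := hSU M hMA
        have hDsub : D ⊆ A := Finset.filter_subset _ _
        have hGmem : ∀ X ∈ G, ∃ S, S ∈ A ∧ ¬ S ⊆ M ∧ X = S ∩ M := by
          intro X hX
          obtain ⟨S, hS, h⟩ := Finset.mem_image.mp hX
          rw [Finset.mem_filter] at hS
          exact ⟨S, hS.1, hS.2, h.symm⟩
        have hGclosed : ∀ S, S ∈ A → ¬ S ⊆ M → S ∩ M ∈ G := by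
          intro S hS h
          exact Finset.mem_image.mpr ⟨S, Finset.mem_filter.mpr ⟨hS, h⟩, rfl⟩
        have hWS : ∀ S, S ∈ A → ¬ S ⊆ M → (W ⊆ S ∧ S = (S ∩ M) ∪ W) := by
          intro S hS hSM
          have hw : W ⊆ S := by
            rcases key M hMA hMU hmax S hS with h | h
            · exact absurd h hSM
            · exact h
          refine ⟨hw, ?_⟩
          apply Finset.Subset.antisymm
          · intro x hx
            by_cases hxM : x ∈ M
            · exact Finset.mem_union_left _ (Finset.mem_inter.mpr ⟨hx, hxM⟩)
            · exact Finset.mem_union_right _ (Finset.mem_sdiff.mpr ⟨hSU S hS hx, hxM⟩)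
          · exact Finset.union_subset Finset.inter_subset_left hw
        have hGnotE : ∀ X ∈ G, ¬ X ⊆ E₀ := by
          intro X hX hXE
          obtain ⟨S, hSA, hSM, rfl⟩ := hGmem X hX
          have h1 : E₀ ∪ S = E₀ ∪ W := by
            apply Finset.Subset.antisymm
            · intro x hx
              rcases Finset.mem_union.mp hx with h | h
              · exact Finset.mem_union_left _ h
              · rw [(hWS S hSA hSM).2] at h
                rcases Finset.mem_union.mp h with h' | h'
                · exact Finset.mem_union_left _ (hXE h')
                · exact Finset.mem_union_right _ h'
            · intro x hx
              rcases Finset.mem_union.mp hx with h | h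
              · exact Finset.mem_union_left _ h
              · exact Finset.mem_union_right _ ((hWS S hSA hSM).1 h)
          exact hEWA (h1 ▸ hUC E₀ hE₀ S hSA)
        have hHUC : ∀ B₁ ∈ H, ∀ C₁ ∈ H, B₁ ∪ C₁ ∈ H := by
          have hDG : ∀ X ∈ D, ∀ Y₁ ∈ G, X ∪ Y₁ ∈ G := by
            intro X hX Y₁ hY₁
            obtain ⟨S, hSA, hSM, rfl⟩ := hGmem Y₁ hY₁
            rw [Finset.mem_filter] at hX
            have h1 : X ∪ S ∩ M = (X ∪ S) ∩ M := by
              rw [Finset.union_inter_distrib_right, Finset.inter_eq_left.mpr hX.2]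
            rw [h1]
            apply hGclosed
            · exact hUC X hX.1 S hSA
            · intro h; exact hSM (Finset.subset_union_right.trans h)
          intro B₁ hB₁ C₁ hC₁
          rcases Finset.mem_union.mp hB₁ with h1 | h1 <;> rcases Finset.mem_union.mp hC₁ with h2 | h2
          · apply Finset.mem_union_left
            rw [Finset.mem_filter] at h1 h2 ⊢
            exact ⟨hUC _ h1.1 _ h2.1, Finset.union_subset h1.2 h2.2⟩
          · exact Finset.mem_union_right _ (hDG _ h1 _ h2)
          · rw [Finset.union_comm]
            exact Finset.mem_union_right _ (hDG _ h2 _ h1)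
          · apply Finset.mem_union_right
            obtain ⟨S, hSA, hSM, rfl⟩ := hGmem _ h1
            obtain ⟨S', hS'A, hS'M, rfl⟩ := hGmem _ h2
            have h3 : S ∩ M ∪ S' ∩ M = (S ∪ S') ∩ M :=
              (Finset.union_inter_distrib_right _ _ _).symm
            rw [h3]
            apply hGclosed
            · exact hUC _ hSA _ hS'A
            · intro h; exact hSM (Finset.subset_union_left.trans h)
        have hE₀H : E₀ ∈ H := Finset.mem_union_left _ (Finset.mem_filter.mpr ⟨hE₀, hEM⟩)
        have hminH : ∀ X ∈ H, X ⊆ E₀ → X = E₀ := by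
          intro X hX hXE
          rcases Finset.mem_union.mp hX with h | h
          · exact hmin X (hDsub h) hXE
          · exact absurd hXE (hGnotE X h)
        have hMD : M ∈ D := Finset.mem_filter.mpr ⟨hMA, Finset.Subset.rfl⟩
        have hMG : M ∈ G := by
          refine Finset.mem_image.mpr ⟨U, ?_, ?_⟩
          · exact Finset.mem_filter.mpr
              ⟨hUA, fun h => hMU (Finset.Subset.antisymm hMU' h)⟩
          · exact Finset.inter_eq_right.mpr hMU'
        have hHcard : H.card + 1 ≤ A.card := by
          have h1 : H = D ∪ G.erase M := by
            ext X
            simp only [hHdef, Finset.mem_union, Finset.mem_erase]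
            constructor
            · rintro (h | h)
              · exact Or.inl h
              · by_cases hXM : X = M
                · exact Or.inl (hXM ▸ hMD)
                · exact Or.inr ⟨hXM, h⟩
            · rintro (h | h)
              · exact Or.inl h
              · exact Or.inr h.2
          have h2 : H.card ≤ D.card + (G.erase M).card := by
            rw [h1]; exact Finset.card_union_le _ _
          have h3 : (G.erase M).card < G.card := Finset.card_erase_lt_of_mem hMG
          have h4 : G.card ≤ P.card := Finset.card_image_le
          have h5 : D.card + P.card = A.card :=
            Finset.card_filter_add_card_filter_not _
          omega
        obtain ⟨T, hTcard, hThits⟩ := ih H (by omega) hHUC E₀ hE₀H hminH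
        refine ⟨T, le_trans hTcard (by omega), ?_⟩
        intro S hS hSne
        by_cases hSM : S ⊆ M
        · exact hThits S (Finset.mem_union_left _ (Finset.mem_filter.mpr ⟨hS, hSM⟩)) hSne
        · have hXG : S ∩ M ∈ G := hGclosed S hS hSM
          have hXne : S ∩ M ≠ E₀ := by
            intro h
            exact hGnotE _ hXG (h ▸ Finset.Subset.rfl)
          obtain ⟨x, hx⟩ := hThits _ (Finset.mem_union_right _ hXG) hXne
          rw [Finset.mem_inter] at hx
          exact ⟨x, Finset.mem_inter.mpr ⟨(Finset.mem_inter.mp hx.1).1, hx.2⟩⟩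

end KnillAux

theorem knill_bound {α : Type*} [DecidableEq α]
    (A : Finset (Finset α))
    (hUC : ∀ B ∈ A, ∀ C ∈ A, B ∪ C ∈ A)
    (hn : 2 ≤ A.card) (hne : ∃ S ∈ A, S.Nonempty) :
    ∃ x : α, ((A.filter (fun S => x ∈ S)).card : ℝ) ≥
      ((A.card : ℝ) - 1) / Real.logb 2 (A.card : ℝ) := by
  classical
  have hAne : A.Nonempty := Finset.card_pos.mp (by omega)
  obtain ⟨E₀, hE₀, hminlt⟩ : ∃ E₀ ∈ A, ∀ x ∈ A, ¬ x < E₀ := by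
    obtain ⟨M, hM⟩ := A.exists_minimal hAne
    exact ⟨M, hM.1, fun x hx hlt => lt_irrefl _ (lt_of_le_of_lt (hM.2 hx hlt.le) hlt)⟩
  have hmin : ∀ S ∈ A, S ⊆ E₀ → S = E₀ := by
    intro S hS hSE
    by_contra hne2
    exact hminlt S hS (Finset.ssubset_iff_subset_ne.mpr ⟨hSE, hne2⟩)
  obtain ⟨T, hTcard, hThits⟩ := hit_lemma A.card A le_rfl hUC E₀ hE₀ hmin
  have hex : ∃ S ∈ A, S ≠ E₀ := by
    by_contra h
    push_neg at h
    have hsub : A ⊆ {E₀} := fun S hS => Finset.mem_singleton.mpr (h S hS)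
    have := Finset.card_le_card hsub
    simp only [Finset.card_singleton] at this
    omega
  obtain ⟨S₁, hS₁, hS₁ne⟩ := hex
  have hTne : T.Nonempty := by
    obtain ⟨x, hx⟩ := hThits S₁ hS₁ hS₁ne
    exact ⟨x, (Finset.mem_inter.mp hx).2⟩
  -- counting: every member except possibly E₀ meets T
  have hsum : A.card - 1 ≤ ∑ x ∈ T, (A.filter (fun S => x ∈ S)).card := by
    have h2 : ∑ x ∈ T, (A.filter (fun S => x ∈ S)).card = ∑ S ∈ A, (S ∩ T).card := by
      simp_rw [Finset.card_filter]
      rw [Finset.sum_comm]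
      apply Finset.sum_congr rfl
      intro S _
      rw [← Finset.card_filter]
      congr 1
      rw [Finset.filter_mem_eq_inter]
      exact Finset.inter_comm T S
    rw [h2]
    have hstep : (A.erase E₀).card ≤ ∑ S ∈ A.erase E₀, (S ∩ T).card := by
      have hone : ∀ S ∈ A.erase E₀, 1 ≤ (S ∩ T).card := by
        intro S hS
        rw [Finset.mem_erase] at hS
        exact Finset.card_pos.mpr (hThits S hS.2 hS.1)
      calc (A.erase E₀).card = (A.erase E₀).card • 1 := by simp
      _ ≤ ∑ S ∈ A.erase E₀, (S ∩ T).card := Finset.card_nsmul_le_sum _ _ _ hone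
    calc A.card - 1 = (A.erase E₀).card := (Finset.card_erase_of_mem hE₀).symm
    _ ≤ ∑ S ∈ A.erase E₀, (S ∩ T).card := hstep
    _ ≤ ∑ S ∈ A, (S ∩ T).card := Finset.sum_le_sum_of_subset (Finset.erase_subset _ _)
  obtain ⟨x, hxT, hxmax⟩ := T.exists_max_image (fun x => (A.filter (fun S => x ∈ S)).card) hTne
  have hpig : A.card - 1 ≤ T.card * (A.filter (fun S => x ∈ S)).card := by
    calc A.card - 1 ≤ ∑ y ∈ T, (A.filter (fun S => y ∈ S)).card := hsum
    _ ≤ T.card • (A.filter (fun S => x ∈ S)).card := Finset.sum_le_card_nsmul _ _ _ hxmax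
    _ = T.card * (A.filter (fun S => x ∈ S)).card := by rw [smul_eq_mul]
  refine ⟨x, ?_⟩
  have hA2 : (2 : ℝ) ≤ (A.card : ℝ) := by exact_mod_cast hn
  have hT1 : 1 ≤ T.card := Finset.card_pos.mpr hTne
  have hTpos : (0 : ℝ) < (T.card : ℝ) := by exact_mod_cast hT1
  have hlogpos : 0 < Real.logb 2 (A.card : ℝ) := Real.logb_pos one_lt_two (by linarith)
  have hTlog : (T.card : ℝ) ≤ Real.logb 2 (A.card : ℝ) := by
    have h1 : ((2 : ℝ)) ^ (T.card : ℕ) ≤ (A.card : ℝ) := by exact_mod_cast hTcard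
    have h2 : Real.logb 2 ((2 : ℝ) ^ (T.card : ℕ)) ≤ Real.logb 2 (A.card : ℝ) :=
      Real.logb_le_logb_of_le one_lt_two (by positivity) h1
    rwa [Real.logb_pow, Real.logb_self_eq_one (by norm_num : (1:ℝ) < 2), mul_one] at h2
  have hfreq : ((A.card : ℝ) - 1) ≤ (T.card : ℝ) * ((A.filter (fun S => x ∈ S)).card : ℝ) := by
    have hcast : ((A.card - 1 : ℕ) : ℝ) = (A.card : ℝ) - 1 := by
      have h1 : 1 ≤ A.card := by omega
      push_cast [Nat.cast_sub h1]
      ring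
    rw [← hcast]
    exact_mod_cast hpig
  rw [ge_iff_le, div_le_iff₀ hlogpos]
  have hfnonneg : (0 : ℝ) ≤ ((A.filter (fun S => x ∈ S)).card : ℝ) := by positivity
  calc ((A.card : ℝ) - 1) ≤ (T.card : ℝ) * ((A.filter (fun S => x ∈ S)).card : ℝ) := hfreq
  _ ≤ Real.logb 2 (A.card : ℝ) * ((A.filter (fun S => x ∈ S)).card : ℝ) :=
      mul_le_mul_of_nonneg_right hTlog hfnonneg
  _ = ((A.filter (fun S => x ∈ S)).card : ℝ) * Real.logb 2 (A.card : ℝ) := mul_comm _ _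
end

section
/- Every finite lower semimodular lattice L with at least two elements contains a join-irreducible element a such that the up-set {x ∈ L : x ≥ a} has at most |L|/2 elements. -/
theorem reinhold_lower_semimodular {L : Type*} [Lattice L] [Fintype L]
    (hcard : 2 ≤ Fintype.card L)
    (hsm : ∀ a b : L, b ⋖ a ⊔ b → a ⊓ b ⋖ a) :
    ∃ a : L, SupIrred a ∧ 2 * {x : L | a ≤ x}.ncard ≤ Fintype.card L := by
  classical
  have hne : Nonempty L := Fintype.card_pos_iff.mp (by omega)
  -- there is a top element M
  obtain ⟨M, -, hM⟩ : ∃ m ∈ (Finset.univ : Finset L), ∀ x ∈ (Finset.univ : Finset L), ¬ m < x := by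
    obtain ⟨i, hi, h⟩ := Finset.exists_maximal (s := Finset.univ)
      ⟨Classical.arbitrary L, Finset.mem_univ _⟩
    exact ⟨i, hi, fun x hx hlt => hlt.not_ge (h hx hlt.le)⟩
  have htop : ∀ x : L, x ≤ M := by
    intro x
    by_contra h
    exact hM (x ⊔ M) (Finset.mem_univ _)
      (lt_of_le_of_ne le_sup_right (fun he => h (he ▸ le_sup_left)))
  -- a coatom m
  obtain ⟨y, hy⟩ := Fintype.exists_ne_of_one_lt_card (by omega) M
  obtain ⟨m, hm1, hm2⟩ : ∃ m ∈ Finset.univ.filter (fun x => x < M),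
      ∀ x ∈ Finset.univ.filter (fun x => x < M), ¬ m < x := by
    obtain ⟨i, hi, h⟩ := Finset.exists_maximal (s := Finset.univ.filter (fun x => x < M))
      ⟨y, by simp [lt_of_le_of_ne (htop y) hy]⟩
    exact ⟨i, hi, fun x hx hlt => hlt.not_ge (h hx hlt.le)⟩
  simp only [Finset.mem_filter, Finset.mem_univ, true_and] at hm1
  have hm2' : ∀ z, m < z → z = M := by
    intro z hz
    by_contra h
    exact hm2 z (by simp [lt_of_le_of_ne (htop z) h]) hz
  -- a minimal element not below m
  obtain ⟨a, ha1, ha2⟩ : ∃ a ∈ Finset.univ.filter (fun x => ¬ x ≤ m),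
      ∀ x ∈ Finset.univ.filter (fun x => ¬ x ≤ m), ¬ x < a := by
    obtain ⟨i, hi, h⟩ := Finset.exists_minimal (s := Finset.univ.filter (fun x => ¬ x ≤ m))
      ⟨M, by simp [hm1.not_ge]⟩
    exact ⟨i, hi, fun x hx hlt => hlt.not_ge (h hx hlt.le)⟩
  simp only [Finset.mem_filter, Finset.mem_univ, true_and] at ha1
  have hmin : ∀ z, z < a → z ≤ m := by
    intro z hz
    by_contra h
    exact ha2 z (by simp [h]) hz
  refine ⟨a, ⟨?_, ?_⟩, ?_⟩
  · -- ¬ IsMin a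
    intro hisz
    exact ha1 (le_trans (hisz (inf_le_left : a ⊓ m ≤ a)) inf_le_right)
  · -- sup-irreducible
    intro b c hbc
    by_contra h
    push_neg at h
    have hb : b ≤ m := hmin b (lt_of_le_of_ne (hbc ▸ le_sup_left) h.1)
    have hc : c ≤ m := hmin c (lt_of_le_of_ne (hbc ▸ le_sup_right) h.2)
    exact ha1 (hbc ▸ sup_le hb hc)
  · -- counting
    set S : Set L := {x | a ≤ x} with hS
    have hcov : ∀ x ∈ S, x ⊓ m ⋖ x := by
      intro x hx
      have hxm : ¬ x ≤ m := fun h => ha1 (le_trans hx h)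
      apply hsm
      constructor
      · exact lt_of_le_of_ne le_sup_right (fun he => hxm (le_trans le_sup_left he.symm.le))
      · intro z hz hz2
        have hzM : z = M := hm2' z hz
        subst hzM; exact absurd hz2 (not_lt_of_ge (htop (x ⊔ m)))
    have hinj : Set.InjOn (fun x => x ⊓ m) S := by
      intro x hx y hy hxy
      simp only at hxy
      have covx := hcov x hx
      have covy := hcov y hy
      have hw : a ≤ x ⊓ y := le_inf hx hy
      have hwc : ¬ x ⊓ y ≤ x ⊓ m := fun h =>
        ha1 (le_trans (le_trans hw h) inf_le_right)
      have h1 : x ⊓ m ⊔ x ⊓ y = x := by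
        have hle : x ⊓ m ⊔ x ⊓ y ≤ x := sup_le inf_le_left inf_le_left
        have hlt : x ⊓ m < x ⊓ m ⊔ x ⊓ y :=
          lt_of_le_of_ne le_sup_left (fun he => hwc (le_trans le_sup_right he.symm.le))
        rcases hle.lt_or_eq with h | h
        · exact absurd h (covx.2 hlt)
        · exact h
      have hwc' : ¬ x ⊓ y ≤ y ⊓ m := fun h =>
        ha1 (le_trans (le_trans hw h) inf_le_right)
      have h2 : y ⊓ m ⊔ x ⊓ y = y := by
        have hle : y ⊓ m ⊔ x ⊓ y ≤ y := sup_le inf_le_left inf_le_right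
        have hlt : y ⊓ m < y ⊓ m ⊔ x ⊓ y :=
          lt_of_le_of_ne le_sup_left (fun he => hwc' (le_trans le_sup_right he.symm.le))
        rcases hle.lt_or_eq with h | h
        · exact absurd h (covy.2 hlt)
        · exact h
      calc x = x ⊓ m ⊔ x ⊓ y := h1.symm
        _ = y ⊓ m ⊔ x ⊓ y := by rw [hxy]
        _ = y := h2
    have hdisj : Disjoint S ((fun x => x ⊓ m) '' S) := by
      rw [Set.disjoint_left]
      rintro z hz ⟨x, hx, rfl⟩
      exact ha1 (le_trans hz inf_le_right)
    have himg : ((fun x => x ⊓ m) '' S).ncard = S.ncard := Set.ncard_image_of_injOn hinj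
    calc 2 * S.ncard = S.ncard + ((fun x => x ⊓ m) '' S).ncard := by omega
      _ = (S ∪ (fun x => x ⊓ m) '' S).ncard := (Set.ncard_union_eq hdisj).symm
      _ ≤ (Set.univ : Set L).ncard := Set.ncard_le_ncard (Set.subset_univ _) Set.finite_univ
      _ = Fintype.card L := by simp [Set.ncard_univ, Nat.card_eq_fintype_card]
end

section
/- Let L be a finite lattice with at least two elements, and suppose the top element 1 is not join-irreducible. Let b be a lower cover of 1 and a a join-irreducible element with a ≰ b. If L is lower semimodular, then the map x ↦ x ∧ b is an injection from {x : x ≥ a} into {x : ¬(x ≥ a)}. -/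
theorem reinhold_injection {L : Type*} [Lattice L] [OrderTop L] [Fintype L]
    (hcard : 2 ≤ Fintype.card L)
    (htop : ¬ SupIrred (⊤ : L))
    (b : L) (hb : b ⋖ (⊤ : L))
    (a : L) (ha : SupIrred a) (hab : ¬ a ≤ b)
    (hsm : ∀ x y : L, y ⋖ x ⊔ y → x ⊓ y ⋖ x) :
    Set.InjOn (fun x => x ⊓ b) {x : L | a ≤ x} ∧
    Set.MapsTo (fun x => x ⊓ b) {x : L | a ≤ x} {x : L | ¬ a ≤ x} := by
  have key : ∀ x : L, a ≤ x → x ⊓ b ⋖ x := by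
    intro x hx
    have hne : x ⊔ b ≠ b := by
      intro h
      exact hab (hx.trans (le_sup_left.trans h.le))
    have hlt : b < x ⊔ b := lt_of_le_of_ne le_sup_right (Ne.symm hne)
    have htopeq : x ⊔ b = ⊤ := (lt_or_eq_of_le le_top).resolve_left (hb.2 hlt)
    exact hsm x b (by rw [htopeq]; exact hb)
  constructor
  · intro x hx y hy hxy
    simp only [Set.mem_setOf_eq] at hx hy
    simp only at hxy
    have covx := key x hx
    have covy := key y hy
    have hc1 : x ⊓ b ≤ x ⊓ y := le_inf inf_le_left (hxy.le.trans inf_le_left)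
    have haxy : a ≤ x ⊓ y := le_inf hx hy
    rcases covx.eq_or_eq hc1 inf_le_left with h | h
    · exact absurd ((haxy.trans h.le).trans inf_le_right) hab
    · have hxley : x ≤ y := h ▸ inf_le_right
      rcases covy.eq_or_eq (hxy ▸ (inf_le_left : x ⊓ b ≤ x)) hxley with h2 | h2
      · exact absurd ((hx.trans h2.le).trans inf_le_right) hab
      · exact h2
  · intro x hx hmem
    simp only [Set.mem_setOf_eq] at hx hmem ⊢
    exact hab (hmem.trans inf_le_right)
end

section
/- Let G be a bipartite graph and x, y adjacent vertices such that every vertex at distance at most 2 from x is adjacent to y (i.e., N²(x) ⊆ N(y), where N²(x) denotes the set of neighbours of neighbours of x, including x). Then y is rare: the number of maximal stable sets of G containing y is at most half the total number of maximal stable sets of G. -/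
/-- A set of vertices is stable (independent) in a graph. -/
def IsStable {V : Type*} (G : SimpleGraph V) (s : Set V) : Prop :=
  ∀ ⦃a⦄, a ∈ s → ∀ ⦃b⦄, b ∈ s → ¬ G.Adj a b

/-- A maximal stable set. -/
def IsMaxStable {V : Type*} (G : SimpleGraph V) (s : Set V) : Prop :=
  IsStable G s ∧ ∀ t : Set V, IsStable G t → s ⊆ t → s = t

theorem rare_vertex_of_second_neighbourhood {V : Type*} [Fintype V]
    (G : SimpleGraph V) (hbip : G.Colorable 2)
    (x y : V) (hxy : G.Adj x y)
    (hN2 : ∀ z : V, (z = x ∨ ∃ u : V, G.Adj x u ∧ G.Adj u z) → G.Adj y z) :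
    2 * {s : Set V | IsMaxStable G s ∧ y ∈ s}.ncard ≤
      {s : Set V | IsMaxStable G s}.ncard := by
  classical
  obtain ⟨C⟩ := hbip
  set N2 : Set V := {z | z = x ∨ ∃ u : V, G.Adj x u ∧ G.Adj u z} with hN2def
  have hxN2 : x ∈ N2 := Or.inl rfl
  have hcol : ∀ z ∈ N2, (C z : Fin 2) = C x := by
    rintro z (rfl | ⟨u, hxu, huz⟩)
    · rfl
    · have h1 : (C u).val ≠ (C x).val := fun h => C.valid hxu.symm (Fin.ext h)
      have h2 : (C z).val ≠ (C u).val := fun h => C.valid huz.symm (Fin.ext h)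
      have b1 := (C x).isLt
      have b2 := (C u).isLt
      have b3 := (C z).isLt
      exact Fin.ext (by omega)
  have hstabN2 : ∀ z1 ∈ N2, ∀ z2 ∈ N2, ¬ G.Adj z1 z2 := by
    intro z1 h1 z2 h2 hadj
    exact C.valid hadj (by rw [hcol z1 h1, hcol z2 h2])
  have hyN2 : y ∉ N2 := fun h => G.loopless.irrefl y (hN2 y h)
  -- maximal stable sets containing y avoid N2
  have hSN2 : ∀ S : Set V, IsMaxStable G S → y ∈ S → ∀ z ∈ N2, z ∉ S := by
    intro S hS hy z hz hzS
    exact hS.1 hy hzS (hN2 z hz)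
  -- maximal stable sets containing y contain all of N(x)
  have hSNx : ∀ S : Set V, IsMaxStable G S → y ∈ S → ∀ u, G.Adj x u → u ∈ S := by
    intro S hS hy u hxu
    have hstab : IsStable G (insert u S) := by
      intro a ha b hb hab
      rcases ha with rfl | ha
      · rcases hb with rfl | hb
        · exact G.loopless.irrefl _ hab
        · exact hSN2 S hS hy b (Or.inr ⟨a, hxu, hab⟩) hb
      · rcases hb with rfl | hb
        · exact hSN2 S hS hy a (Or.inr ⟨b, hxu, hab.symm⟩) ha
        · exact hS.1 ha hb hab
    have heq := hS.2 _ hstab (Set.subset_insert u S)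
    rw [heq]
    exact Set.mem_insert u S
  set Φ : Set V → Set V := fun S =>
    (S \ {v | G.Adj x v}) ∪ {z | z ∈ N2 ∧ ∀ s ∈ S, ¬ G.Adj x s → ¬ G.Adj z s}
    with hΦdef
  have hxΦ : ∀ S, x ∈ Φ S := fun S => Or.inr ⟨hxN2, fun s _ hns => hns⟩
  have hΦstab : ∀ S : Set V, IsMaxStable G S → IsStable G (Φ S) := by
    intro S hS a ha b hb hab
    rcases ha with ⟨haS, hax⟩ | ⟨haN2, haP⟩
    · rcases hb with ⟨hbS, hbx⟩ | ⟨hbN2, hbP⟩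
      · exact hS.1 haS hbS hab
      · exact hbP a haS hax hab.symm
    · rcases hb with ⟨hbS, hbx⟩ | ⟨hbN2, hbP⟩
      · exact haP b hbS hbx hab
      · exact hstabN2 a haN2 b hbN2 hab
  have hΦmax : ∀ S : Set V, IsMaxStable G S → y ∈ S → IsMaxStable G (Φ S) := by
    intro S hS hy
    refine ⟨hΦstab S hS, ?_⟩
    intro t ht hsub
    by_contra hne
    have hex : ∃ v, v ∈ t ∧ v ∉ Φ S := by
      by_contra h
      push_neg at h
      exact hne (Set.Subset.antisymm hsub h)
    obtain ⟨v, hvt, hvΦ⟩ := hex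
    have : ∃ w ∈ Φ S, G.Adj v w := by
      by_cases hvx : G.Adj x v
      · exact ⟨x, hxΦ S, hvx.symm⟩
      by_cases hvN2 : v ∈ N2
      · have hcond : ¬ (∀ s ∈ S, ¬ G.Adj x s → ¬ G.Adj v s) :=
          fun h => hvΦ (Or.inr ⟨hvN2, h⟩)
        push_neg at hcond
        obtain ⟨s, hsS, hsx, hvs⟩ := hcond
        exact ⟨s, Or.inl ⟨hsS, hsx⟩, hvs⟩
      · have hvS : v ∉ S := fun h => hvΦ (Or.inl ⟨h, hvx⟩)
        have hnst : ¬ IsStable G (insert v S) := by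
          intro hst
          exact hvS (by rw [hS.2 _ hst (Set.subset_insert v S)]; exact Set.mem_insert v S)
        unfold IsStable at hnst
        push_neg at hnst
        obtain ⟨a, ha, b, hb, hab⟩ := hnst
        rcases ha with rfl | ha <;> rcases hb with rfl | hb
        · exact absurd hab (G.loopless.irrefl _)
        · have hbx : ¬ G.Adj x b := fun h => hvN2 (Or.inr ⟨b, h, hab.symm⟩)
          exact ⟨b, Or.inl ⟨hb, hbx⟩, hab⟩
        · have hax : ¬ G.Adj x a := fun h => hvN2 (Or.inr ⟨a, h, hab⟩)
          exact ⟨a, Or.inl ⟨ha, hax⟩, hab.symm⟩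
        · exact absurd hab (hS.1 ha hb)
    obtain ⟨w, hwΦ, hvw⟩ := this
    exact ht hvt (hsub hwΦ) hvw
  have hyΦ : ∀ S, y ∉ Φ S := by
    rintro S (⟨-, hyx⟩ | ⟨hyn, -⟩)
    · exact hyx hxy
    · exact hyN2 hyn
  -- recovery of S from Φ S
  have hrec : ∀ S : Set V, IsMaxStable G S → y ∈ S →
      S = (Φ S \ N2) ∪ {v | G.Adj x v} := by
    intro S hS hy
    ext v
    constructor
    · intro hvS
      by_cases hvx : G.Adj x v
      · exact Or.inr hvx
      · exact Or.inl ⟨Or.inl ⟨hvS, hvx⟩, fun h => hSN2 S hS hy v h hvS⟩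
    · rintro (⟨hvΦ, hvN2⟩ | hvx)
      · rcases hvΦ with ⟨hvS, -⟩ | ⟨hvN2', -⟩
        · exact hvS
        · exact absurd hvN2' hvN2
      · exact hSNx S hS hy v hvx
  set A := {s : Set V | IsMaxStable G s ∧ y ∈ s} with hA
  set B := {s : Set V | IsMaxStable G s ∧ y ∉ s} with hB
  set M := {s : Set V | IsMaxStable G s} with hMdef
  have hmaps : ∀ S ∈ A, Φ S ∈ B := fun S hS => ⟨hΦmax S hS.1 hS.2, hyΦ S⟩
  have hinj : Set.InjOn Φ A := by
    intro S1 h1 S2 h2 heq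
    rw [hrec S1 h1.1 h1.2, hrec S2 h2.1 h2.2, heq]
  have hAB : A.ncard ≤ B.ncard :=
    Set.ncard_le_ncard_of_injOn Φ hmaps hinj (Set.toFinite B)
  have hM : M = A ∪ B := by
    ext s
    simp only [hMdef, hA, hB, Set.mem_setOf_eq, Set.mem_union]
    tauto
  have hdisj : Disjoint A B := Set.disjoint_left.mpr fun s hs ht => ht.2 hs.2
  have hsum : M.ncard = A.ncard + B.ncard := by
    rw [hM, Set.ncard_union_eq hdisj (Set.toFinite A) (Set.toFinite B)]
  omega
end

section
/- Let A be a finite union-closed family of subsets of a universe of size m containing more than 2^m − (1/2)·√(2^m) member-sets. Then A has an element contained in at least |A|/2 member-sets. -/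
open Finset

theorem nishimura_takahashi {α : Type*} [DecidableEq α] [Fintype α]
    (A : Finset (Finset α))
    (hUC : ∀ B ∈ A, ∀ C ∈ A, B ∪ C ∈ A)
    (hA : A ≠ {∅})
    (hbig : ((2 : ℝ) ^ Fintype.card α - Real.sqrt (2 ^ Fintype.card α) / 2
      < (A.card : ℝ))) :
    ∃ x : α, 2 * (A.filter (fun S => x ∈ S)).card ≥ A.card := by
  classical
  set m := Fintype.card α with hm
  have hs : Real.sqrt ((2:ℝ)^m) ^ 2 = 2^m := Real.sq_sqrt (by positivity)
  have hsnn : (0:ℝ) ≤ Real.sqrt ((2:ℝ)^m) := Real.sqrt_nonneg _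
  have hN1 : (1:ℝ) ≤ 2 ^ m := one_le_pow₀ one_le_two
  have hApos : 0 < A.card := by
    have h0 : (0:ℝ) < A.card := by nlinarith
    exact_mod_cast h0
  have hm1 : 1 ≤ m := by
    by_contra h
    push_neg at h
    have hm0 : m = 0 := Nat.lt_one_iff.mp h
    have hE : IsEmpty α := Fintype.card_eq_zero_iff.mp hm0
    apply hA
    obtain ⟨S, hS⟩ := card_pos.mp hApos
    have hall : ∀ T ∈ A, T = ∅ := fun T _ => Finset.eq_empty_of_isEmpty T
    refine Finset.eq_singleton_iff_unique_mem.mpr ⟨?_, hall⟩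
    rwa [hall S hS] at hS
  set D : Finset (Finset α) := univ \ A with hDdef
  have hAsub : A ⊆ univ := subset_univ A
  have hcards : A.card + D.card = 2 ^ m := by
    rw [hDdef, card_sdiff_of_subset hAsub]
    have huniv : (univ : Finset (Finset α)).card = 2 ^ m := by
      simp [Finset.card_univ, Fintype.card_finset, hm]
    have : A.card ≤ (univ : Finset (Finset α)).card := card_le_card hAsub
    omega
  have hDreal : (2 * D.card : ℝ) < Real.sqrt ((2:ℝ) ^ m) := by
    have h1 : (A.card : ℝ) + D.card = 2 ^ m := by exact_mod_cast hcards
    nlinarith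
  have hDsq : (2 * D.card)^2 < 2 ^ m := by
    have h2 : ((2 * D.card : ℕ) : ℝ)^2 < ((2^m : ℕ) : ℝ) := by
      push_cast
      calc (2 * (D.card:ℝ))^2 < Real.sqrt ((2:ℝ)^m) ^ 2 :=
            pow_lt_pow_left₀ hDreal (by positivity) two_ne_zero
        _ = 2 ^ m := hs
    exact_mod_cast h2
  have key : ∀ T ∈ D, 2 * T.card ≤ m := by
    intro T hT
    have hTA : T ∉ A := (mem_sdiff.mp hT).2
    have hpow : 2 ^ T.card ≤ 2 * D.card := by
      have hmain := Finset.card_le_mul_card_image_of_maps_to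
        (f := fun B => if B ∈ A then T \ B else B) (s := T.powerset) (t := D)
        ?_ 2 ?_
      · calc 2 ^ T.card = T.powerset.card := (card_powerset T).symm
          _ ≤ 2 * D.card := hmain
      · intro B hB
        have hBT : B ⊆ T := mem_powerset.mp hB
        by_cases hBA : B ∈ A
        · simp only [hBA, if_true]
          rw [hDdef, mem_sdiff]
          refine ⟨mem_univ _, fun hc => hTA ?_⟩
          have := hUC B hBA (T \ B) hc
          rwa [union_sdiff_of_subset hBT] at this
        · simp only [hBA, if_false]
          rw [hDdef, mem_sdiff]
          exact ⟨mem_univ _, hBA⟩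
      · intro d hd
        refine le_trans (card_le_card (t := ({T \ d, d} : Finset (Finset α))) (fun B hB => ?_)) ?_
        · simp only [mem_filter, mem_powerset] at hB
          obtain ⟨hBT, hfB⟩ := hB
          by_cases hBA : B ∈ A
          · simp only [hBA, if_true] at hfB
            have : B = T \ d := by rw [← hfB, (Finset.sdiff_sdiff_eq_self hBT)]
            simp [this]
          · simp only [hBA, if_false] at hfB
            simp [hfB]
        · exact le_trans (card_insert_le _ _) (by simp)
    have hlt : 2 ^ (2 * T.card) < 2 ^ m := by
      calc 2 ^ (2 * T.card) = (2 ^ T.card)^2 := by rw [pow_mul']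
        _ ≤ (2 * D.card)^2 := Nat.pow_le_pow_left hpow 2
        _ < 2 ^ m := hDsq
    exact le_of_lt (Nat.pow_lt_pow_iff_right one_lt_two |>.mp hlt)
  have hswap : ∀ F : Finset (Finset α),
      ∑ x : α, (F.filter (fun S => x ∈ S)).card = ∑ S ∈ F, S.card := by
    intro F
    simp_rw [Finset.card_filter]
    rw [Finset.sum_comm]
    congr 1
    ext S
    simp [Finset.sum_ite_mem]
  have hcU : ∀ x : α, 2 * (univ.filter (fun S : Finset α => x ∈ S)).card = 2 ^ m := by
    intro x
    have hbij : (univ.filter (fun S : Finset α => x ∈ S)).card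
        = (univ.filter (fun S : Finset α => ¬ x ∈ S)).card := by
      refine Finset.card_bij' (fun S _ => S.erase x) (fun S _ => insert x S)
        ?_ ?_ ?_ ?_ <;> intro S hS <;>
        simp only [mem_filter, mem_univ, true_and] at hS ⊢ <;>
        simp [Finset.insert_erase, Finset.erase_insert, hS]
    have hsum := Finset.card_filter_add_card_filter_not
      (s := (univ : Finset (Finset α))) (p := fun S : Finset α => x ∈ S)
    have huniv : (univ : Finset (Finset α)).card = 2 ^ m := by
      simp [Finset.card_univ, Fintype.card_finset, hm]
    omega
  have hsplit : ∀ x : α, (A.filter (fun S => x ∈ S)).card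
      + (D.filter (fun S => x ∈ S)).card
      = (univ.filter (fun S : Finset α => x ∈ S)).card := by
    intro x
    rw [← card_union_of_disjoint (disjoint_filter_filter Finset.disjoint_sdiff),
      ← filter_union, union_sdiff_of_subset hAsub]
  by_contra hcon
  push_neg at hcon
  have hcon' : ∀ x : α, 2 * (A.filter (fun S => x ∈ S)).card + 1 ≤ A.card := by
    intro x; exact Nat.succ_le_of_lt (hcon x)
  set SA := ∑ x : α, (A.filter (fun S => x ∈ S)).card with hSA
  set SD := ∑ x : α, (D.filter (fun S => x ∈ S)).card with hSD
  set SU := ∑ x : α, (univ.filter (fun S : Finset α => x ∈ S)).card with hSU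
  have h1 : 2 * SA + 2 * SD = m * 2 ^ m := by
    have h3 : SA + SD = SU := by
      rw [hSA, hSD, hSU, ← Finset.sum_add_distrib]
      exact Finset.sum_congr rfl (fun x _ => hsplit x)
    have h2 : 2 * SU = m * 2 ^ m := by
      rw [hSU, Finset.mul_sum]
      calc ∑ x : α, 2 * (univ.filter (fun S : Finset α => x ∈ S)).card
          = ∑ _x : α, 2 ^ m := Finset.sum_congr rfl (fun x _ => hcU x)
        _ = m * 2 ^ m := by rw [Finset.sum_const, card_univ, smul_eq_mul]
    calc 2 * SA + 2 * SD = 2 * (SA + SD) := by ring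
      _ = 2 * SU := by rw [h3]
      _ = m * 2 ^ m := h2
  have h2 : 2 * SD ≤ m * D.card := by
    rw [hSD, hswap D, Finset.mul_sum]
    calc ∑ T ∈ D, 2 * T.card ≤ ∑ _T ∈ D, m := Finset.sum_le_sum key
      _ = D.card * m := by rw [Finset.sum_const, smul_eq_mul]
      _ = m * D.card := mul_comm _ _
  have h5 : 2 * SA + m ≤ m * A.card := by
    have h4 := Finset.sum_le_sum (s := (univ : Finset α))
      (fun x (_ : x ∈ (univ : Finset α)) => hcon' x)
    rw [Finset.sum_add_distrib, ← Finset.mul_sum, Finset.sum_const, Finset.sum_const,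
      card_univ, smul_eq_mul, smul_eq_mul, mul_one] at h4
    rw [hSA]
    linarith
  have h6 : m * A.card + m * D.card = m * 2 ^ m := by rw [← Nat.mul_add, hcards]
  linarith
end

section
/- Let A be a finite union-closed family of subsets of a set of size m, and suppose every subset S of the universe with |S| ≥ m/2 belongs to A. Then the average set size (1/|A|)·Σ_{S∈A}|S| is at least m/2, and consequently some element is contained in at least |A|/2 member-sets of A. -/
theorem avg_set_size_of_large_sets_present {α : Type*} [DecidableEq α]
    [Fintype α] [Nonempty α]
    (A : Finset (Finset α))
    (hUC : ∀ B ∈ A, ∀ C ∈ A, B ∪ C ∈ A)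
    (hbig : ∀ S : Finset α, Fintype.card α ≤ 2 * S.card → S ∈ A) :
    Fintype.card α * A.card ≤ 2 * ∑ S ∈ A, S.card ∧
    ∃ x : α, 2 * (A.filter (fun S => x ∈ S)).card ≥ A.card := by
  classical
  set m := Fintype.card α with hm
  have hm1 : 1 ≤ m := Fintype.card_pos
  have huniv : (Finset.univ : Finset α) ∈ A := hbig _ (by simp [Finset.card_univ]; omega)
  have hAne : 1 ≤ A.card := Finset.card_pos.mpr ⟨_, huniv⟩
  have key : m * A.card ≤ 2 * ∑ S ∈ A, S.card := by
    set small := A.filter (fun S => 2 * S.card < m) with hs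
    set large := A.filter (fun S => m ≤ 2 * S.card) with hl
    have hdisj : Disjoint small large := by
      rw [Finset.disjoint_left]
      intro S h1 h2
      simp only [hs, hl, Finset.mem_filter] at h1 h2
      omega
    have hunion : small ∪ large = A := by
      ext S
      simp only [hs, hl, Finset.mem_union, Finset.mem_filter]
      constructor
      · rintro (⟨h, _⟩ | ⟨h, _⟩) <;> exact h
      · intro h; by_cases hc : m ≤ 2 * S.card
        · exact Or.inr ⟨h, hc⟩
        · exact Or.inl ⟨h, by omega⟩
    set img := small.image compl with himg
    have hinj : Set.InjOn compl (small : Set (Finset α)) :=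
      fun a _ b _ h => compl_injective h
    have himgcard : img.card = small.card := Finset.card_image_of_injOn hinj
    have himgsub : img ⊆ large := by
      intro S hS
      simp only [himg, Finset.mem_image] at hS
      obtain ⟨T, hT, rfl⟩ := hS
      simp only [hs, Finset.mem_filter] at hT
      have hc : Tᶜ.card = m - T.card := Finset.card_compl T
      have hTle : T.card ≤ m := by
        simpa [hm] using Finset.card_le_univ T
      have hge : m ≤ 2 * Tᶜ.card := by omega
      exact Finset.mem_filter.mpr ⟨hbig _ hge, hge⟩
    have hsum_img : ∑ S ∈ img, 2 * S.card = ∑ T ∈ small, 2 * Tᶜ.card :=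
      Finset.sum_image (fun a ha b hb h => hinj ha hb h)
    have hsplit_large : ∑ S ∈ (large \ img), 2 * S.card + ∑ S ∈ img, 2 * S.card
        = ∑ S ∈ large, 2 * S.card := Finset.sum_sdiff himgsub
    have hsdiff_lb : m * (large \ img).card ≤ ∑ S ∈ (large \ img), 2 * S.card := by
      calc m * (large \ img).card = ∑ _S ∈ (large \ img), m := by
            rw [Finset.sum_const, smul_eq_mul, mul_comm]
        _ ≤ ∑ S ∈ (large \ img), 2 * S.card := by
            apply Finset.sum_le_sum
            intro S hS
            have := (Finset.mem_filter.mp (Finset.mem_sdiff.mp hS).1).2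
            exact this
    have hsmall_pair : ∑ T ∈ small, 2 * T.card + ∑ T ∈ small, 2 * Tᶜ.card
        = 2 * m * small.card := by
      rw [← Finset.sum_add_distrib]
      have : ∀ T ∈ small, 2 * T.card + 2 * Tᶜ.card = 2 * m := by
        intro T hT
        have hc : Tᶜ.card = m - T.card := Finset.card_compl T
        have hTle : T.card ≤ m := by simpa [hm] using Finset.card_le_univ T
        omega
      rw [Finset.sum_congr rfl this, Finset.sum_const, smul_eq_mul, mul_comm]
    have hcardsplit : small.card + large.card = A.card := by
      rw [← hunion, Finset.card_union_of_disjoint hdisj]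
    have hsdiffcard : (large \ img).card = large.card - img.card :=
      Finset.card_sdiff_of_subset himgsub
    have himgle : img.card ≤ large.card := Finset.card_le_card himgsub
    have hsumsplit : ∑ S ∈ small, 2 * S.card + ∑ S ∈ large, 2 * S.card
        = 2 * ∑ S ∈ A, S.card := by
      rw [Finset.mul_sum, ← Finset.sum_union hdisj, hunion]
    have e1 : m * A.card = m * small.card + m * large.card := by
      rw [← hcardsplit, Nat.mul_add]
    have hsle : small.card ≤ large.card := by omega
    have e2 : m * (large \ img).card + m * small.card = m * large.card := by
      rw [hsdiffcard, himgcard, ← Nat.mul_add, Nat.sub_add_cancel hsle]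
    have e3 : 2 * m * small.card = m * small.card + m * small.card := by ring
    omega
  refine ⟨key, ?_⟩
  have dc : ∑ x : α, (A.filter (fun S => x ∈ S)).card = ∑ S ∈ A, S.card := by
    have h1 : ∀ x : α, (A.filter (fun S => x ∈ S)).card
        = ∑ S ∈ A, if x ∈ S then 1 else 0 := fun x => Finset.card_filter _ _
    simp_rw [h1]
    rw [Finset.sum_comm]
    refine Finset.sum_congr rfl fun S _ => ?_
    rw [← Finset.card_filter]
    simp
  by_contra hcon
  push_neg at hcon
  have hub : ∑ x : α, 2 * (A.filter (fun S => x ∈ S)).card ≤ m * (A.card - 1) := by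
    calc ∑ x : α, 2 * (A.filter (fun S => x ∈ S)).card
        ≤ ∑ _x : α, (A.card - 1) := by
          apply Finset.sum_le_sum
          intro x _
          have := hcon x
          omega
      _ = m * (A.card - 1) := by
          rw [Finset.sum_const, Finset.card_univ, smul_eq_mul]
  rw [← Finset.mul_sum, dc] at hub
  have : m * A.card ≤ m * (A.card - 1) := le_trans key hub
  have hlt : m * (A.card - 1) < m * A.card := by
    exact mul_lt_mul_of_pos_left (by omega) (by omega)
  omega
end

section
/- Let A be a finite separating union-closed family on a universe of m elements. Then Σ_{u∈U(A)} |A_u| ≥ m(m+1)/2; equivalently, the average frequency is at least (m+1)/2. -/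
open Finset

private lemma frav_sum_image_le {α β : Type*} [DecidableEq α] [DecidableEq β] (s : Finset α)
    (g : α → β) (f : β → ℕ) :
    ∑ t ∈ s.image g, f t ≤ ∑ t ∈ s, f (g t) := by
  induction s using Finset.induction with
  | empty => simp
  | insert a s h ih =>
    rw [image_insert, sum_insert h]
    by_cases hg : g a ∈ s.image g
    · rw [insert_eq_self.mpr hg]
      omega
    · rw [sum_insert hg]; omega

private lemma frav_doublecount {α : Type*} [DecidableEq α] (A : Finset (Finset α)) :
    ∑ u ∈ A.biUnion id, (A.filter (fun S => u ∈ S)).card = ∑ S ∈ A, S.card := by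
  simp_rw [Finset.card_filter]
  rw [Finset.sum_comm]
  refine Finset.sum_congr rfl fun S hS => ?_
  rw [← Finset.card_filter, Finset.filter_mem_eq_inter]
  exact congrArg Finset.card (Finset.inter_eq_right.mpr (Finset.subset_biUnion_of_mem id hS))

private lemma frav_main {α : Type*} [DecidableEq α] (n : ℕ) :
    ∀ (A : Finset (Finset α)), (A.biUnion id).card ≤ n →
    (∀ B ∈ A, ∀ C ∈ A, B ∪ C ∈ A) →
    (∀ x ∈ A.biUnion id, ∀ y ∈ A.biUnion id, x ≠ y →
      ∃ S ∈ A, (x ∈ S ∧ y ∉ S) ∨ (x ∉ S ∧ y ∈ S)) →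
    (A.biUnion id).card * ((A.biUnion id).card + 1) ≤
      2 * ∑ u ∈ A.biUnion id, (A.filter (fun S => u ∈ S)).card := by
  induction n with
  | zero =>
    intro A h _ _
    rw [Nat.le_zero] at h
    rw [h]
    simp
  | succ n ih =>
    intro A hcard hUC hsep
    set U := A.biUnion id with hUdef
    by_cases hm : U.card ≤ 1
    · -- small case: Σ d(u) ≥ U.card, and m(m+1) ≤ 2m for m ≤ 1
      have h1 : ∀ u ∈ U, 1 ≤ (A.filter (fun S => u ∈ S)).card := by
        intro u hu
        obtain ⟨S, hS, huS⟩ := Finset.mem_biUnion.mp hu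
        exact Finset.card_pos.mpr ⟨S, Finset.mem_filter.mpr ⟨hS, huS⟩⟩
      have hsum : U.card ≤ ∑ u ∈ U, (A.filter (fun S => u ∈ S)).card := by
        calc U.card = ∑ u ∈ U, 1 := by simp
        _ ≤ _ := Finset.sum_le_sum h1
      nlinarith
    · push_neg at hm
      have hm2 : 2 ≤ U.card := hm
      have hUne : U.Nonempty := Finset.card_pos.mp (by omega)
      obtain ⟨w, hw⟩ := hUne
      obtain ⟨Sw, hSwA, _⟩ := Finset.mem_biUnion.mp hw
      have hAne : A.Nonempty := ⟨Sw, hSwA⟩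
      have hUsub : ∀ S ∈ A, S ⊆ U := fun S hS => Finset.subset_biUnion_of_mem id hS
      -- U ∈ A
      have hsup_mem : ∀ (W : Finset (Finset α)) (hW : W.Nonempty), W ⊆ A → W.sup id ∈ A := by
        intro W hWne hWA
        have := Finset.sup'_mem (↑A : Set (Finset α))
          (fun x hx y hy => hUC x hx y hy) W hWne id (fun S hS => hWA hS)
        rwa [Finset.sup'_eq_sup] at this
      have hUA : U ∈ A := by
        have h1 : A.sup id ∈ A := hsup_mem A hAne (Finset.Subset.refl A)
        rwa [Finset.sup_eq_biUnion] at h1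
      -- pick u of minimal degree
      obtain ⟨u, huU, humin⟩ :=
        Finset.exists_min_image U (fun v => (A.filter (fun S => v ∈ S)).card) ⟨w, hw⟩
      -- every other element lies in a set avoiding u
      have hav : ∀ v ∈ U, v ≠ u → ∃ S ∈ A, v ∈ S ∧ u ∉ S := by
        intro v hv hvu
        by_contra hcon
        push_neg at hcon
        have hsub : A.filter (fun S => v ∈ S) ⊆ A.filter (fun S => u ∈ S) := by
          intro S hS
          rw [Finset.mem_filter] at hS ⊢
          exact ⟨hS.1, hcon S hS.1 hS.2⟩
        have heq : A.filter (fun S => v ∈ S) = A.filter (fun S => u ∈ S) :=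
          Finset.eq_of_subset_of_card_le hsub (humin v hv)
        obtain ⟨S, hSA, hS⟩ := hsep u huU v hv (Ne.symm hvu)
        rcases hS with ⟨huS, hvS⟩ | ⟨huS, hvS⟩
        · have : S ∈ A.filter (fun S => v ∈ S) := by
            rw [heq]; exact Finset.mem_filter.mpr ⟨hSA, huS⟩
          exact hvS (Finset.mem_filter.mp this).2
        · have : S ∈ A.filter (fun S => u ∈ S) := by
            rw [← heq]; exact Finset.mem_filter.mpr ⟨hSA, hvS⟩
          exact huS (Finset.mem_filter.mp this).2
      set T := U.erase u with hTdef
      have hTcard : T.card + 1 = U.card := by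
        rw [hTdef, Finset.card_erase_of_mem huU]; omega
      -- T ∈ A
      set W := A.filter (fun S => u ∉ S) with hWdef
      have hWne : W.Nonempty := by
        obtain ⟨v, hv, hvu⟩ := Finset.exists_mem_ne hm u
        obtain ⟨S, hSA, _, huS⟩ := hav v hv hvu
        exact ⟨S, Finset.mem_filter.mpr ⟨hSA, huS⟩⟩
      have hWT : W.sup id = T := by
        ext x
        rw [Finset.mem_sup, hTdef, Finset.mem_erase]
        constructor
        · rintro ⟨S, hSW, hxS⟩
          rw [Finset.mem_filter] at hSW
          exact ⟨fun h => hSW.2 (h ▸ hxS), hUsub S hSW.1 hxS⟩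
        · rintro ⟨hxu, hxU⟩
          obtain ⟨S, hSA, hxS, huS⟩ := hav x hxU hxu
          exact ⟨S, Finset.mem_filter.mpr ⟨hSA, huS⟩, hxS⟩
      have hTA : T ∈ A := hWT ▸ hsup_mem W hWne (Finset.filter_subset _ _)
      have hTU : T ⊆ U := Finset.erase_subset u U
      have huT : u ∉ T := Finset.notMem_erase u U
      have hTneU : T ≠ U := fun h => huT (h ▸ huU)
      -- the projected family
      set B := A.image (fun S => S ∩ T) with hBdef
      have hBU : B.biUnion id = T := by
        ext x
        rw [Finset.mem_biUnion]
        constructor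
        · rintro ⟨S', hS', hxS'⟩
          obtain ⟨S, hSA, rfl⟩ := Finset.mem_image.mp hS'
          exact (Finset.mem_inter.mp hxS').2
        · intro hxT
          obtain ⟨S, hSA, hxS⟩ := Finset.mem_biUnion.mp (hTU hxT)
          exact ⟨S ∩ T, Finset.mem_image_of_mem _ hSA, Finset.mem_inter.mpr ⟨hxS, hxT⟩⟩
      have hBUC : ∀ B1 ∈ B, ∀ C1 ∈ B, B1 ∪ C1 ∈ B := by
        intro B1 hB1 C1 hC1
        obtain ⟨S1, hS1, rfl⟩ := Finset.mem_image.mp hB1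
        obtain ⟨S2, hS2, rfl⟩ := Finset.mem_image.mp hC1
        rw [← Finset.union_inter_distrib_right]
        exact Finset.mem_image_of_mem _ (hUC S1 hS1 S2 hS2)
      have hBsep : ∀ x ∈ B.biUnion id, ∀ y ∈ B.biUnion id, x ≠ y →
          ∃ S ∈ B, (x ∈ S ∧ y ∉ S) ∨ (x ∉ S ∧ y ∈ S) := by
        rw [hBU]
        intro x hx y hy hxy
        obtain ⟨S, hSA, hS⟩ := hsep x (hTU hx) y (hTU hy) hxy
        refine ⟨S ∩ T, Finset.mem_image_of_mem _ hSA, ?_⟩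
        rcases hS with ⟨h1, h2⟩ | ⟨h1, h2⟩
        · exact Or.inl ⟨Finset.mem_inter.mpr ⟨h1, hx⟩, fun h => h2 (Finset.mem_inter.mp h).1⟩
        · exact Or.inr ⟨fun h => h1 (Finset.mem_inter.mp h).1, Finset.mem_inter.mpr ⟨h2, hy⟩⟩
      have hBcard : (B.biUnion id).card ≤ n := by rw [hBU]; omega
      have hIH := ih B hBcard hBUC hBsep
      rw [frav_doublecount, hBU] at hIH
      have hgoal : ∑ u ∈ U, (A.filter (fun S => u ∈ S)).card = ∑ S ∈ A, S.card := by
        rw [hUdef]; exact frav_doublecount A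
      rw [hgoal]
      -- counting
      have hB_from_erase : B = (A.erase U).image (fun S => S ∩ T) := by
        apply Finset.Subset.antisymm
        · intro S' hS'
          obtain ⟨S, hSA, rfl⟩ := Finset.mem_image.mp hS'
          by_cases hSU : S = U
          · subst hSU
            exact Finset.mem_image.mpr ⟨T, Finset.mem_erase.mpr ⟨hTneU, hTA⟩,
              by rw [Finset.inter_self, Finset.inter_eq_right.mpr hTU]⟩
          · exact Finset.mem_image_of_mem _ (Finset.mem_erase.mpr ⟨hSU, hSA⟩)
        · exact Finset.image_subset_image (Finset.erase_subset U A)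
      have claim1 : ∑ S' ∈ B, S'.card + T.card ≤ ∑ S ∈ A, (S ∩ T).card := by
        rw [← Finset.add_sum_erase A (fun S => (S ∩ T).card) hUA,
          Finset.inter_eq_right.mpr hTU, hB_from_erase]
        have := frav_sum_image_le (A.erase U) (fun S => S ∩ T) (fun S : Finset α => S.card)
        omega
      have claim2 : ∑ S ∈ A, (S ∩ T).card + 1 ≤ ∑ S ∈ A, S.card := by
        have hterm : ∀ S ∈ A, (S ∩ T).card + (if u ∈ S then 1 else 0) = S.card := by
          intro S hS
          have h1 : S ∩ T = S.erase u := by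
            rw [hTdef]
            ext x
            simp only [Finset.mem_inter, Finset.mem_erase]
            constructor
            · rintro ⟨h1, h2, _⟩; exact ⟨h2, h1⟩
            · rintro ⟨h1, h2⟩; exact ⟨h2, h1, hUsub S hS h2⟩
          rw [h1]
          by_cases huS : u ∈ S
          · rw [Finset.card_erase_of_mem huS, if_pos huS]
            have := Finset.card_pos.mpr ⟨u, huS⟩
            omega
          · rw [Finset.erase_eq_of_notMem huS, if_neg huS]
            omega
        have hsum : ∑ S ∈ A, (S ∩ T).card + ∑ S ∈ A, (if u ∈ S then 1 else 0)
            = ∑ S ∈ A, S.card := by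
          rw [← Finset.sum_add_distrib]
          exact Finset.sum_congr rfl hterm
        have hone : 1 ≤ ∑ S ∈ A, (if u ∈ S then 1 else 0) := by
          calc (1:ℕ) = if u ∈ U then 1 else 0 := by rw [if_pos huU]
          _ ≤ ∑ S ∈ A, if u ∈ S then 1 else 0 :=
            Finset.single_le_sum (f := fun S => if u ∈ S then 1 else 0)
              (fun S _ => Nat.zero_le _) hUA
        omega
      nlinarith [hIH, claim1, claim2, hTcard]

theorem falgas_ravry_average {α : Type*} [DecidableEq α]
    (A : Finset (Finset α))
    (hUC : ∀ B ∈ A, ∀ C ∈ A, B ∪ C ∈ A)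
    (hsep : ∀ x ∈ A.biUnion id, ∀ y ∈ A.biUnion id, x ≠ y →
      ∃ S ∈ A, (x ∈ S ∧ y ∉ S) ∨ (x ∉ S ∧ y ∈ S)) :
    (A.biUnion id).card * ((A.biUnion id).card + 1) ≤
      2 * ∑ u ∈ A.biUnion id, (A.filter (fun S => u ∈ S)).card := by
  exact frav_main (A.biUnion id).card A le_rfl hUC hsep
end

section
/- Any finite separating union-closed family A on a universe of m ≥ 1 elements with at most 2m member-sets has an element contained in at least |A|/2 member-sets. -/
lemma sup_mem_of_union_closed {α : Type*} [DecidableEq α]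
    (A : Finset (Finset α)) (hUC : ∀ B ∈ A, ∀ C ∈ A, B ∪ C ∈ A) :
    ∀ B : Finset (Finset α), B.Nonempty → B ⊆ A → B.sup id ∈ A := by
  intro B
  induction B using Finset.induction_on with
  | empty => intro h; exact absurd rfl h.ne_empty
  | @insert a s ha ih =>
    intro _ hsub
    rcases s.eq_empty_or_nonempty with rfl | hs
    · simpa using hsub (Finset.mem_insert_self a _)
    · rw [Finset.sup_insert]
      exact hUC a (hsub (Finset.mem_insert_self a _)) _
        (ih hs (fun x hx => hsub (Finset.mem_insert_of_mem hx)))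

theorem small_separating_families {α : Type*} [DecidableEq α]
    (A : Finset (Finset α))
    (hUC : ∀ B ∈ A, ∀ C ∈ A, B ∪ C ∈ A)
    (hsep : ∀ x ∈ A.biUnion id, ∀ y ∈ A.biUnion id, x ≠ y →
      ∃ S ∈ A, (x ∈ S ∧ y ∉ S) ∨ (x ∉ S ∧ y ∈ S))
    (hm : 1 ≤ (A.biUnion id).card)
    (hsmall : A.card ≤ 2 * (A.biUnion id).card) :
    ∃ x ∈ A.biUnion id, 2 * (A.filter (fun S => x ∈ S)).card ≥ A.card := by
  classical
  set M := A.biUnion id with hM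
  have hMne : M.Nonempty := Finset.card_pos.mp hm
  -- the total union is a member
  have hAne : A.Nonempty := by
    obtain ⟨x, hx⟩ := hMne
    rw [hM, Finset.mem_biUnion] at hx
    obtain ⟨S, hS, _⟩ := hx
    exact ⟨S, hS⟩
  have hsupA : A.sup id ∈ A := sup_mem_of_union_closed A hUC A hAne (le_refl A)
  have hsup_eq : A.sup id = M := by
    rw [hM]; exact Finset.sup_eq_biUnion A id
  -- choose x* of maximal degree
  obtain ⟨x, hxM, hxmax⟩ := Finset.exists_max_image M
    (fun x => (A.filter (fun S => x ∈ S)).card) hMne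
  refine ⟨x, hxM, ?_⟩
  -- key: for every z ≠ x there is a member containing x but not z
  have key : ∀ z ∈ M, z ≠ x → ∃ S ∈ A, x ∈ S ∧ z ∉ S := by
    intro z hzM hzx
    by_contra hcon
    push_neg at hcon
    -- every member containing x contains z
    have hsub : A.filter (fun S => x ∈ S) ⊆ A.filter (fun S => z ∈ S) := by
      intro S hS
      rw [Finset.mem_filter] at hS ⊢
      exact ⟨hS.1, hcon S hS.1 hS.2⟩
    obtain ⟨T, hT, hTor⟩ := hsep x hxM z hzM (Ne.symm hzx)
    rcases hTor with ⟨hxT, hzT⟩ | ⟨hxT, hzT⟩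
    · exact hzT (hcon T hT hxT)
    · have hssub : A.filter (fun S => x ∈ S) ⊂ A.filter (fun S => z ∈ S) := by
        refine ⟨hsub, fun h => hxT ?_⟩
        have : T ∈ A.filter (fun S => x ∈ S) := h (Finset.mem_filter.mpr ⟨hT, hzT⟩)
        exact (Finset.mem_filter.mp this).2
      have := Finset.card_lt_card hssub
      have := hxmax z hzM
      omega
  -- for z ≠ x, the union of all members avoiding z
  set D : α → Finset α := fun z => ((A.filter (fun S => z ∉ S)).sup id) with hD
  have hDmem : ∀ z ∈ M, z ≠ x → D z ∈ A ∧ x ∈ D z ∧ z ∉ D z := by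
    intro z hzM hzx
    obtain ⟨S, hS, hxS, hzS⟩ := key z hzM hzx
    have hSf : S ∈ A.filter (fun T => z ∉ T) := Finset.mem_filter.mpr ⟨hS, hzS⟩
    refine ⟨sup_mem_of_union_closed A hUC _ ⟨S, hSf⟩ (Finset.filter_subset _ _), ?_, ?_⟩
    · exact Finset.mem_sup.mpr ⟨S, hSf, hxS⟩
    · intro hz
      obtain ⟨T, hT, hzT⟩ := Finset.mem_sup.mp hz
      exact (Finset.mem_filter.mp hT).2 hzT
  -- injection from M into the members containing x
  set φ : α → Finset α := fun z => if z = x then A.sup id else D z with hφ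
  have hmaps : ∀ z ∈ M, φ z ∈ A.filter (fun S => x ∈ S) := by
    intro z hzM
    rw [hφ]
    by_cases hzx : z = x
    · simp only [hzx, if_pos rfl]
      refine Finset.mem_filter.mpr ⟨hsupA, ?_⟩
      rw [hsup_eq]; exact hxM
    · simp only [if_neg hzx]
      obtain ⟨h1, h2, _⟩ := hDmem z hzM hzx
      exact Finset.mem_filter.mpr ⟨h1, h2⟩
  have hinj : Set.InjOn φ M := by
    intro z hzM w hwM heq
    by_contra hzw
    rw [hφ] at heq
    simp only at heq
    by_cases hzx : z = x
    · -- w ≠ x, φ w = D w doesn't contain w, but sup contains w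
      have hwx : w ≠ x := fun h => hzw (h ▸ hzx ▸ rfl)
      rw [if_pos hzx, if_neg hwx] at heq
      obtain ⟨_, _, h3⟩ := hDmem w hwM hwx
      apply h3
      rw [← heq, hsup_eq]
      exact hwM
    · by_cases hwx : w = x
      · rw [if_neg hzx, if_pos hwx] at heq
        obtain ⟨_, _, h3⟩ := hDmem z hzM hzx
        apply h3
        rw [heq, hsup_eq]
        exact hzM
      · rw [if_neg hzx, if_neg hwx] at heq
        obtain ⟨S, hS, hor⟩ := hsep z hzM w hwM hzw
        rcases hor with ⟨hzS, hwS⟩ | ⟨hzS, hwS⟩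
        · -- S avoids w, contains z, so z ∈ D w = D z, contradiction
          obtain ⟨_, _, h3⟩ := hDmem z hzM hzx
          apply h3
          rw [heq]
          exact Finset.mem_sup.mpr ⟨S, Finset.mem_filter.mpr ⟨hS, hwS⟩, hzS⟩
        · obtain ⟨_, _, h3⟩ := hDmem w hwM hwx
          apply h3
          rw [← heq]
          exact Finset.mem_sup.mpr ⟨S, Finset.mem_filter.mpr ⟨hS, hzS⟩, hwS⟩
  have hcard : M.card ≤ (A.filter (fun S => x ∈ S)).card :=
    Finset.card_le_card_of_injOn φ hmaps hinj
  omega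
end

section
/- Let A be a finite union-closed family of finite sets with n member-sets. Then Σ_{S∈A} |S| ≥ (n/2)·log₂(n); that is, the average set size is at least log₂(n)/2. -/
namespace ReimerAux

open Finset




variable {α : Type*} [DecidableEq α]

/-- Up-compression move of a single set. -/
def rmv (x : α) (F : Finset (Finset α)) (S : Finset α) : Finset α :=
  if insert x S ∈ F then S else insert x S

/-- Up-compression of a family at `x`. -/
def rstep (x : α) (F : Finset (Finset α)) : Finset (Finset α) :=
  F.image (rmv x F)

/-- Iterated compression: resulting family. -/
def rFam : List α → Finset (Finset α) → Finset (Finset α)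
  | [], F => F
  | x :: xs, F => rFam xs (rstep x F)

/-- Iterated compression: where a set is sent. -/
def rMap : List α → Finset (Finset α) → Finset α → Finset α
  | [], _, S => S
  | x :: xs, F, S => rMap xs (rstep x F) (rmv x F S)

lemma rmv_mem {x : α} {F : Finset (Finset α)} {S : Finset α} (hS : S ∈ F) :
    rmv x F S ∈ rstep x F := mem_image_of_mem _ hS

lemma subset_rmv (x : α) (F : Finset (Finset α)) (S : Finset α) : S ⊆ rmv x F S := by
  unfold rmv; split_ifs <;> simp [subset_insert]

lemma rmv_subset_insert (x : α) (F : Finset (Finset α)) (S : Finset α) :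
    rmv x F S ⊆ insert x S := by
  unfold rmv; split_ifs <;> simp [subset_insert]

lemma rMap_mem {l : List α} {F : Finset (Finset α)} {S : Finset α} (hS : S ∈ F) :
    rMap l F S ∈ rFam l F := by
  induction l generalizing F S with
  | nil => exact hS
  | cons x xs ih => exact ih (rmv_mem hS)

lemma rFam_surj {l : List α} {F : Finset (Finset α)} {V : Finset α} (hV : V ∈ rFam l F) :
    ∃ S ∈ F, rMap l F S = V := by
  induction l generalizing F with
  | nil => exact ⟨V, hV, rfl⟩
  | cons x xs ih =>
    obtain ⟨W, hW, hWV⟩ := ih hV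
    obtain ⟨S, hS, hSW⟩ := mem_image.1 hW
    exact ⟨S, hS, by rw [show rMap (x :: xs) F S = rMap xs (rstep x F) (rmv x F S) from rfl,
      hSW, hWV]⟩

lemma subset_rMap (l : List α) (F : Finset (Finset α)) (S : Finset α) : S ⊆ rMap l F S := by
  induction l generalizing F S with
  | nil => exact Subset.rfl
  | cons x xs ih => exact (subset_rmv x F S).trans (ih _ _)

lemma rMap_subset (l : List α) (F : Finset (Finset α)) (S : Finset α) :
    rMap l F S ⊆ S ∪ l.toFinset := by
  induction l generalizing F S with
  | nil => simp [rMap]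
  | cons x xs ih =>
    refine (ih (rstep x F) (rmv x F S)).trans ?_
    intro a ha
    rcases mem_union.1 ha with h | h
    · rcases mem_insert.1 (rmv_subset_insert x F S h) with h' | h'
      · simp [h']
      · simp [h']
    · simp [mem_union, List.mem_toFinset] at h ⊢
      tauto

/-- Key absorption invariant: being a "union-absorber" for the family is preserved
by compression. -/
lemma absorb_rstep {x : α} {F : Finset (Finset α)} {S : Finset α}
    (h : ∀ V ∈ F, S ∪ V ∈ F) : ∀ V ∈ rstep x F, S ∪ V ∈ rstep x F := by
  intro V' hV'
  obtain ⟨V, hV, rfl⟩ := mem_image.1 hV'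
  have hG : S ∪ V ∈ F := h V hV
  unfold rmv
  split_ifs with h1
  · -- V stays; show S ∪ V stays
    have hxG : insert x (S ∪ V) ∈ F := by
      by_cases hx : x ∈ S ∪ V
      · rwa [insert_eq_self.2 hx]
      · have : S ∪ insert x V ∈ F := h _ h1
        rwa [union_insert] at this
    have : rmv x F (S ∪ V) = S ∪ V := by unfold rmv; rw [if_pos hxG]
    rw [← this]; exact rmv_mem hG
  · -- V moves to insert x V
    rw [union_insert]
    by_cases h2 : insert x (S ∪ V) ∈ F
    · have : rmv x F (insert x (S ∪ V)) = insert x (S ∪ V) := by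
        unfold rmv; rw [insert_idem, if_pos h2]
      rw [← this]; exact rmv_mem h2
    · have : rmv x F (S ∪ V) = insert x (S ∪ V) := by unfold rmv; rw [if_neg h2]
      rw [← this]; exact rmv_mem hG

lemma keyU {S : Finset α} : ∀ (l : List α) (F : Finset (Finset α)),
    (∀ V ∈ F, S ∪ V ∈ F) → ∀ T ∈ F, S ∪ rMap l F T ∈ rFam l F := by
  intro l
  induction l with
  | nil => intro F h T hT; exact h T hT
  | cons x xs ih =>
    intro F h T hT
    exact ih (rstep x F) (absorb_rstep h) (rmv x F T) (rmv_mem hT)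

lemma rFam_append (l : List α) (x : α) (F : Finset (Finset α)) :
    rFam (l ++ [x]) F = rstep x (rFam l F) := by
  induction l generalizing F with
  | nil => rfl
  | cons y ys ih => exact ih (rstep y F)

lemma rMap_append (l : List α) (x : α) (F : Finset (Finset α)) (S : Finset α) :
    rMap (l ++ [x]) F S = rmv x (rFam l F) (rMap l F S) := by
  induction l generalizing F S with
  | nil => rfl
  | cons y ys ih => exact ih (rstep y F) (rmv y F S)
-- continues part1
/-- Helper: the cross case is impossible. -/
lemma no_cross {A : Finset (Finset α)} (hUC : ∀ B ∈ A, ∀ C ∈ A, B ∪ C ∈ A)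
    {l : List α} {x : α} (hxl : x ∉ l) {S T R : Finset α} (hS : S ∈ A) (hT : T ∈ A)
    (hxφS : x ∈ rMap l A S) (hxφT : x ∉ rMap l A T)
    (hSR : S ⊆ R) (hRT : R ⊆ rmv x (rFam l A) (rMap l A T)) (hxR : x ∈ R) : False := by
  set F := rFam l A with hF
  set φT := rMap l A T with hφT
  -- x ∈ S
  have hxS : x ∈ S := by
    have := rMap_subset l A S hxφS
    rcases mem_union.1 this with h | h
    · exact h
    · exact absurd (List.mem_toFinset.1 h) hxl
  -- the T-cube moved: insert x φT ∉ F
  have hmoved : insert x φT ∉ F := by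
    intro hmem
    have : rmv x F φT = φT := by unfold rmv; rw [if_pos hmem]
    rw [this] at hRT
    exact hxφT (hRT hxR)
  -- but S ∪ φT ∈ F and S ∪ φT = insert x φT
  have hmemU : S ∪ φT ∈ F := keyU l A (fun V hV => hUC S hS V hV) T hT
  have hEq : S ∪ φT = insert x φT := by
    apply Subset.antisymm
    · apply union_subset
      · exact hSR.trans (hRT.trans (rmv_subset_insert _ _ _))
      · exact subset_insert _ _
    · exact insert_subset (mem_union_left _ hxS) subset_union_right
  rw [hEq] at hmemU
  exact hmoved hmemU

/-- Reimer's key lemma: the cubes `[S, Φ S]` are pairwise disjoint. -/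
lemma cubes_disjoint {A : Finset (Finset α)} (hUC : ∀ B ∈ A, ∀ C ∈ A, B ∪ C ∈ A)
    (l : List α) (hl : l.Nodup) :
    ∀ S ∈ A, ∀ T ∈ A, ∀ R : Finset α, S ⊆ R → T ⊆ R →
      R ⊆ rMap l A S → R ⊆ rMap l A T → S = T := by
  induction l using List.reverseRecOn with
  | nil =>
    intro S hS T hT R hSR hTR hRS hRT
    simp only [rMap] at hRS hRT
    exact Subset.antisymm (hSR.trans hRT) (hTR.trans hRS)
  | append_singleton l x ih =>
    have hl' : l.Nodup := (List.nodup_append.1 hl).1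
    have hxl : x ∉ l := fun hx => (List.nodup_append.1 hl).2.2 x hx x (by simp) rfl
    intro S hS T hT R hSR hTR hRS hRT
    rw [rMap_append] at hRS hRT
    set F := rFam l A
    set φS := rMap l A S with hφS
    set φT := rMap l A T with hφT
    by_cases hxR : x ∈ R
    · by_cases hxS : x ∈ φS
      · by_cases hxT : x ∈ φT
        · -- neither cube moved (tops already contain x)
          have h1 : R ⊆ φS := by
            refine hRS.trans ?_
            refine (rmv_subset_insert _ _ _).trans ?_
            rw [insert_eq_self.2 hxS]
          have h2 : R ⊆ φT := by
            refine hRT.trans ?_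
            refine (rmv_subset_insert _ _ _).trans ?_
            rw [insert_eq_self.2 hxT]
          exact ih hl' S hS T hT R hSR hTR h1 h2
        · exact absurd (no_cross hUC hxl hS hT hxS hxT hSR hRT hxR) not_false
      · by_cases hxT : x ∈ φT
        · exact absurd (no_cross hUC hxl hT hS hxT hxS hTR hRS hxR) not_false
        · -- both cubes moved; pass to R.erase x
          have hxSS : x ∉ S := fun h => hxS (subset_rMap l A S h)
          have hxTT : x ∉ T := fun h => hxT (subset_rMap l A T h)
          refine ih hl' S hS T hT (R.erase x) (subset_erase.2 ⟨hSR, hxSS⟩)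
            (subset_erase.2 ⟨hTR, hxTT⟩) ?_ ?_
          · intro a ha
            have haR : a ∈ R := mem_of_mem_erase ha
            have : a ∈ insert x φS := (hRS.trans (rmv_subset_insert _ _ _)) haR
            rcases mem_insert.1 this with h | h
            · exact absurd h (ne_of_mem_erase ha)
            · exact h
          · intro a ha
            have haR : a ∈ R := mem_of_mem_erase ha
            have : a ∈ insert x φT := (hRT.trans (rmv_subset_insert _ _ _)) haR
            rcases mem_insert.1 this with h | h
            · exact absurd h (ne_of_mem_erase ha)
            · exact h
    · -- x ∉ R : both containments descend
      have h1 : R ⊆ φS := by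
        intro a ha
        rcases mem_insert.1 ((hRS.trans (rmv_subset_insert _ _ _)) ha) with h | h
        · exact absurd (h ▸ ha) hxR
        · exact h
      have h2 : R ⊆ φT := by
        intro a ha
        rcases mem_insert.1 ((hRT.trans (rmv_subset_insert _ _ _)) ha) with h | h
        · exact absurd (h ▸ ha) hxR
        · exact h
      exact ih hl' S hS T hT R hSR hTR h1 h2

/-- Monotone (upward closed in direction x) families. -/
def RMono (x : α) (F : Finset (Finset α)) : Prop := ∀ V ∈ F, insert x V ∈ F

lemma rmono_self (x : α) (F : Finset (Finset α)) : RMono x (rstep x F) := by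
  intro V' hV'
  obtain ⟨V, hV, rfl⟩ := mem_image.1 hV'
  unfold rmv
  split_ifs with h1
  · have : rmv x F (insert x V) = insert x V := by unfold rmv; rw [insert_idem, if_pos h1]
    rw [← this]; exact rmv_mem h1
  · rw [insert_idem]
    have : rmv x F V = insert x V := by unfold rmv; rw [if_neg h1]
    rw [← this]; exact rmv_mem hV

lemma rmono_rstep {x y : α} {F : Finset (Finset α)} (hM : RMono x F) :
    RMono x (rstep y F) := by
  intro V' hV'
  obtain ⟨V, hV, rfl⟩ := mem_image.1 hV'
  have hW : insert x V ∈ F := hM V hV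
  unfold rmv
  split_ifs with h1
  · have h2 : insert y (insert x V) ∈ F := by
      rw [Finset.insert_comm]; exact hM _ h1
    have : rmv y F (insert x V) = insert x V := by unfold rmv; rw [if_pos h2]
    rw [← this]; exact rmv_mem hW
  · rw [Finset.insert_comm]
    by_cases h2 : insert y (insert x V) ∈ F
    · have : rmv y F (insert y (insert x V)) = insert y (insert x V) := by
        unfold rmv; rw [insert_idem, if_pos h2]
      rw [← this]; exact rmv_mem h2
    · have : rmv y F (insert x V) = insert y (insert x V) := by unfold rmv; rw [if_neg h2]
      rw [← this]; exact rmv_mem hW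

lemma rmono_rFam {x : α} (l : List α) {F : Finset (Finset α)} (hM : RMono x F) :
    RMono x (rFam l F) := by
  induction l generalizing F with
  | nil => exact hM
  | cons y ys ih => exact ih (rmono_rstep hM)

lemma rmono_of_mem {x : α} {l : List α} (hx : x ∈ l) (F : Finset (Finset α)) :
    RMono x (rFam l F) := by
  induction l generalizing F with
  | nil => cases hx
  | cons y ys ih =>
    rcases List.mem_cons.1 hx with rfl | h
    · by_cases hys : x ∈ ys
      · exact ih hys _
      · exact rmono_rFam ys (rmono_self x F)
    · exact ih h _
lemma sum_card_eq_sum_count (F : Finset (Finset α)) (U : Finset α) (h : ∀ S ∈ F, S ⊆ U) :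
    ∑ S ∈ F, S.card = ∑ x ∈ U, (F.filter (fun S => x ∈ S)).card := by
  have h1 : ∀ S ∈ F, S.card = ∑ x ∈ U, if x ∈ S then 1 else 0 := by
    intro S hS
    have : U.filter (fun x => x ∈ S) = S := by
      ext a; simp only [mem_filter, and_iff_right_iff_imp]
      exact fun ha => h S hS ha
    rw [← Finset.card_filter, this]
  calc ∑ S ∈ F, S.card = ∑ S ∈ F, ∑ x ∈ U, if x ∈ S then 1 else 0 :=
        Finset.sum_congr rfl h1
    _ = ∑ x ∈ U, ∑ S ∈ F, if x ∈ S then 1 else 0 := Finset.sum_comm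
    _ = ∑ x ∈ U, (F.filter (fun S => x ∈ S)).card := by
        refine Finset.sum_congr rfl fun x _ => ?_
        rw [Finset.card_filter]

theorem reimer_average_set_size' {α : Type*} [DecidableEq α]
    (A : Finset (Finset α))
    (hUC : ∀ B ∈ A, ∀ C ∈ A, B ∪ C ∈ A) :
    ((∑ S ∈ A, S.card : ℕ) : ℝ) ≥
      (A.card : ℝ) / 2 * Real.logb 2 (A.card : ℝ) := by
  classical
  rcases A.eq_empty_or_nonempty with rfl | hA
  · simp
  set U : Finset α := A.sup id with hU
  have hSU : ∀ S ∈ A, S ⊆ U := fun S hS => le_sup (f := id) hS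
  set l := U.toList with hl
  have hlnd : l.Nodup := Finset.nodup_toList U
  have hltF : l.toFinset = U := Finset.toList_toFinset U
  set Φ : Finset α → Finset α := rMap l A with hΦ
  set B := rFam l A with hB
  have hmemB : ∀ S ∈ A, Φ S ∈ B := fun S hS => rMap_mem hS
  have hsub : ∀ S, S ⊆ Φ S := fun S => subset_rMap l A S
  have hΦU : ∀ S ∈ A, Φ S ⊆ U := by
    intro S hS
    refine (rMap_subset l A S).trans ?_
    rw [hltF]
    exact union_subset (hSU S hS) Subset.rfl
  have hdisj := cubes_disjoint hUC l hlnd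
  have hinj : ∀ S ∈ A, ∀ T ∈ A, Φ S = Φ T → S = T := by
    intro S hS T hT hEq
    exact hdisj S hS T hT (Φ S) (hsub S) (hEq ▸ hsub T) Subset.rfl (le_of_eq hEq)
  have hBim : B = A.image Φ := by
    ext V; constructor
    · intro hV; obtain ⟨S, hS, rfl⟩ := rFam_surj hV; exact mem_image_of_mem _ hS
    · intro hV; obtain ⟨S, hS, rfl⟩ := mem_image.1 hV; exact hmemB S hS
  have hcard : B.card = A.card := by
    rw [hBim]; exact card_image_of_injOn fun S hS T hT => hinj S hS T hT
  have hBU : ∀ V ∈ B, V ⊆ U := by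
    intro V hV
    obtain ⟨S, hS, rfl⟩ := rFam_surj hV
    exact hΦU S hS
  have hup : ∀ V ∈ B, ∀ x ∈ U, insert x V ∈ B := by
    intro V hV x hx
    exact rmono_of_mem ((Finset.mem_toList).2 hx) A V hV
  -- per-element counting inequality
  have hcount : ∀ x ∈ U,
      (B.filter (fun V => x ∉ V)).card ≤ (A.filter (fun S => x ∈ S)).card := by
    intro x hx
    apply Finset.card_le_card_of_surjOn (fun S => (Φ S).erase x)
    intro V hV
    simp only [coe_filter, Set.mem_setOf_eq] at hV
    obtain ⟨hVB, hxV⟩ := hV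
    have hiB : insert x V ∈ B := hup V hVB x hx
    obtain ⟨S, hS, hΦS⟩ := rFam_surj hiB
    obtain ⟨S₀, hS₀, hΦS₀⟩ := rFam_surj hVB
    have hxS : x ∈ S := by
      by_contra hxS
      have h1 : S ⊆ V := by
        intro a ha
        have : a ∈ insert x V := hΦS ▸ hsub S ha
        rcases mem_insert.1 this with h | h
        · exact absurd (h ▸ ha) hxS
        · exact h
      have hST : S = S₀ :=
        hdisj S hS S₀ hS₀ V h1 (hΦS₀ ▸ hsub S₀)
          (hΦS ▸ subset_insert x V) (le_of_eq hΦS₀.symm)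
      have hiv : insert x V = V := by rw [← hΦS, hST, hΦS₀]
      exact hxV (hiv ▸ mem_insert_self x V)
    refine ⟨S, ?_, ?_⟩
    · simp only [coe_filter, Set.mem_setOf_eq]
      exact ⟨hS, hxS⟩
    · show (Φ S).erase x = V
      rw [hΦ, hΦS, erase_insert hxV]
  -- numbers
  set n := A.card with hn
  set m := U.card with hm
  set σ := ∑ S ∈ A, S.card with hσ
  set τ := ∑ V ∈ B, V.card with hτ
  set D := ∑ S ∈ A, ((Φ S) \ S).card with hDdef
  have hAsum : σ = ∑ x ∈ U, (A.filter (fun S => x ∈ S)).card :=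
    sum_card_eq_sum_count A U hSU
  have hBsum : τ = ∑ x ∈ U, (B.filter (fun V => x ∈ V)).card :=
    sum_card_eq_sum_count B U hBU
  have hnm : n * m ≤ σ + τ := by
    have hper : ∀ x ∈ U, n ≤ (A.filter (fun S => x ∈ S)).card
        + (B.filter (fun V => x ∈ V)).card := by
      intro x hx
      have hsplit := Finset.card_filter_add_card_filter_not
        (s := B) (p := fun V => x ∈ V)
      have : n = (B.filter (fun V => x ∈ V)).card + (B.filter (fun V => x ∉ V)).card := by
        rw [← hcard]; exact hsplit.symm
      calc n = (B.filter (fun V => x ∈ V)).card + (B.filter (fun V => x ∉ V)).card := this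
        _ ≤ (B.filter (fun V => x ∈ V)).card + (A.filter (fun S => x ∈ S)).card := by
            exact Nat.add_le_add_left (hcount x hx) _
        _ = _ := by omega
    calc n * m = ∑ _x ∈ U, n := by rw [Finset.sum_const, smul_eq_mul, mul_comm]
      _ ≤ ∑ x ∈ U, ((A.filter (fun S => x ∈ S)).card + (B.filter (fun V => x ∈ V)).card) :=
          Finset.sum_le_sum hper
      _ = σ + τ := by rw [Finset.sum_add_distrib, ← hAsum, ← hBsum]
  have hτσ : τ = σ + D := by
    have h1 : τ = ∑ S ∈ A, (Φ S).card := by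
      rw [hτ, hBim]
      exact Finset.sum_image fun S hS T hT => hinj S hS T hT
    rw [h1, hσ, hDdef, ← Finset.sum_add_distrib]
    refine Finset.sum_congr rfl fun S _ => ?_
    rw [add_comm]
    exact (Finset.card_sdiff_add_card_eq_card (hsub S)).symm
  have hpow : ∑ S ∈ A, 2 ^ ((Φ S \ S).card) ≤ 2 ^ m := by
    have hIcc : ∀ S ∈ A, (Finset.Icc S (Φ S)).card = 2 ^ ((Φ S \ S).card) := by
      intro S _
      rw [Finset.card_Icc_finset (hsub S), card_sdiff_of_subset (hsub S)]
    have hpair : ∀ S ∈ A, ∀ T ∈ A, S ≠ T →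
        Disjoint (Finset.Icc S (Φ S)) (Finset.Icc T (Φ T)) := by
      intro S hS T hT hne
      rw [Finset.disjoint_left]
      intro R hR hR'
      rw [Finset.mem_Icc] at hR hR'
      exact hne (hdisj S hS T hT R hR.1 hR'.1 hR.2 hR'.2)
    calc ∑ S ∈ A, 2 ^ ((Φ S \ S).card) = ∑ S ∈ A, (Finset.Icc S (Φ S)).card :=
          Finset.sum_congr rfl fun S hS => (hIcc S hS).symm
      _ = (A.biUnion fun S => Finset.Icc S (Φ S)).card := (Finset.card_biUnion hpair).symm
      _ ≤ (U.powerset).card := by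
          apply Finset.card_le_card
          intro R hR
          obtain ⟨S, hS, hRS⟩ := Finset.mem_biUnion.1 hR
          rw [Finset.mem_Icc] at hRS
          exact Finset.mem_powerset.2 (hRS.2.trans (hΦU S hS))
      _ = 2 ^ m := Finset.card_powerset U
  -- real arithmetic
  have hn1 : 0 < n := Finset.card_pos.2 hA
  have hnR : (0:ℝ) < n := by exact_mod_cast hn1
  have key1 : (n : ℝ) * m ≤ 2 * σ + D := by
    have : n * m ≤ 2 * σ + D := by omega
    exact_mod_cast this
  have keyGM : (2:ℝ) ^ ((D:ℝ)/n) ≤ (2:ℝ) ^ (m:ℝ) / n := by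
    have hgm := Real.geom_mean_le_arith_mean_weighted A (fun _ => 1/(n:ℝ))
      (fun S => (2:ℝ) ^ (((Φ S) \ S).card))
      (fun _ _ => by positivity)
      (by rw [Finset.sum_const, nsmul_eq_mul]; field_simp; rfl)
      (fun _ _ => by positivity)
    have hL : ∏ S ∈ A, ((2:ℝ) ^ (((Φ S) \ S).card)) ^ (1/(n:ℝ))
        = (2:ℝ) ^ ((D:ℝ)/n) := by
      have : ∀ S ∈ A, ((2:ℝ) ^ (((Φ S) \ S).card)) ^ (1/(n:ℝ))
          = (2:ℝ) ^ (((((Φ S) \ S).card : ℝ)) * (1/(n:ℝ))) := by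
        intro S _
        rw [← Real.rpow_natCast 2 (((Φ S) \ S).card), ← Real.rpow_mul (by norm_num)]
      rw [Finset.prod_congr rfl this, ← Real.rpow_sum_of_pos (by norm_num : (0:ℝ) < 2)]
      congr 1
      rw [← Finset.sum_mul, hDdef]
      push_cast
      ring
    have hR : ∑ S ∈ A, (1/(n:ℝ)) * ((2:ℝ) ^ (((Φ S) \ S).card))
        ≤ (2:ℝ) ^ (m:ℝ) / n := by
      rw [← Finset.mul_sum]
      have h2 : (∑ S ∈ A, (2:ℝ) ^ (((Φ S) \ S).card)) ≤ (2:ℝ) ^ (m:ℝ) := by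
        rw [Real.rpow_natCast]
        exact_mod_cast hpow
      calc (1/(n:ℝ)) * ∑ S ∈ A, (2:ℝ) ^ (((Φ S) \ S).card)
          ≤ (1/(n:ℝ)) * ((2:ℝ) ^ (m:ℝ)) :=
            mul_le_mul_of_nonneg_left h2 (by positivity)
        _ = (2:ℝ) ^ (m:ℝ) / n := by ring
    calc (2:ℝ) ^ ((D:ℝ)/n) = ∏ S ∈ A, ((2:ℝ) ^ (((Φ S) \ S).card)) ^ (1/(n:ℝ)) := hL.symm
      _ ≤ ∑ S ∈ A, (1/(n:ℝ)) * ((2:ℝ) ^ (((Φ S) \ S).card)) := hgm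
      _ ≤ (2:ℝ) ^ (m:ℝ) / n := hR
  have hDn : (D:ℝ)/n ≤ (m:ℝ) - Real.logb 2 n := by
    have h1 : (D:ℝ)/n = Real.logb 2 ((2:ℝ) ^ ((D:ℝ)/n)) :=
      (Real.logb_rpow (by norm_num) (by norm_num)).symm
    have h2 : Real.logb 2 ((2:ℝ) ^ ((D:ℝ)/n)) ≤ Real.logb 2 ((2:ℝ) ^ (m:ℝ) / n) :=
      Real.logb_le_logb_of_le (by norm_num) (Real.rpow_pos_of_pos (by norm_num) _) keyGM
    have h3 : Real.logb 2 ((2:ℝ) ^ (m:ℝ) / n) = (m:ℝ) - Real.logb 2 n := by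
      rw [Real.logb_div (ne_of_gt (Real.rpow_pos_of_pos (by norm_num) _)) (ne_of_gt hnR),
        Real.logb_rpow (by norm_num) (by norm_num)]
    rw [h1]
    rw [h3] at h2
    exact h2
  have hD2 : (D:ℝ) ≤ (n:ℝ) * m - n * Real.logb 2 n := by
    have := mul_le_mul_of_nonneg_left hDn (le_of_lt hnR)
    rw [mul_div_cancel₀ _ (ne_of_gt hnR)] at this
    linarith [this]
  rw [ge_iff_le]
  nlinarith [key1, hD2]

end ReimerAux

theorem reimer_average_set_size {α : Type*} [DecidableEq α]
    (A : Finset (Finset α))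
    (hUC : ∀ B ∈ A, ∀ C ∈ A, B ∪ C ∈ A) :
    ((∑ S ∈ A, S.card : ℕ) : ℝ) ≥
      (A.card : ℝ) / 2 * Real.logb 2 (A.card : ℝ) :=
  ReimerAux.reimer_average_set_size' A hUC
end

section
/- Let A be a union-closed family of subsets of a finite set U and i ∈ U. Define u_i(S) = S ∪ {i} if S ∪ {i} ∉ A, and u_i(S) = S otherwise, for S ∈ A. Then the up-compressed family u_i(A) = {u_i(S) : S ∈ A} is union-closed and has the same number of member-sets as A. -/
theorem up_compression_union_closed {α : Type*} [DecidableEq α]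
    (A : Finset (Finset α))
    (hUC : ∀ B ∈ A, ∀ C ∈ A, B ∪ C ∈ A)
    (i : α) :
    let u := fun S : Finset α => if S ∪ {i} ∈ A then S else S ∪ {i}
    (∀ B ∈ A.image u, ∀ C ∈ A.image u, B ∪ C ∈ A.image u) ∧
    (A.image u).card = A.card := by
  intro u
  have hfix : ∀ X, X ∪ {i} ∈ A → u (X ∪ {i}) = X ∪ {i} := by
    intro X hX
    simp only [u, Finset.union_assoc, Finset.union_self, if_pos hX]
  constructor
  · intro B hB C hC
    obtain ⟨S, hS, rfl⟩ := Finset.mem_image.1 hB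
    obtain ⟨T, hT, rfl⟩ := Finset.mem_image.1 hC
    have hST : S ∪ T ∈ A := hUC S hS T hT
    simp only [u]
    split_ifs with h1 h2 h2
    · -- both fixed
      have h3 : (S ∪ T) ∪ {i} ∈ A := by
        have := hUC _ h1 _ h2
        have he : (S ∪ {i}) ∪ (T ∪ {i}) = (S ∪ T) ∪ {i} := by
          ext a; simp [or_comm, or_assoc, or_left_comm]
        rwa [he] at this
      refine Finset.mem_image.2 ⟨S ∪ T, hST, ?_⟩
      simp only [u, if_pos h3]
    · -- S fixed, T changed
      have h3 : (S ∪ T) ∪ {i} ∈ A := by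
        have := hUC _ h1 _ hT
        have he : (S ∪ {i}) ∪ T = (S ∪ T) ∪ {i} := by
          ext a; simp [or_comm, or_assoc, or_left_comm]
        rwa [he] at this
      refine Finset.mem_image.2 ⟨(S ∪ T) ∪ {i}, h3, ?_⟩
      rw [if_pos (by simpa [Finset.union_assoc] using h3)]
      rw [Finset.union_assoc]
    · -- S changed, T fixed
      have h3 : (S ∪ T) ∪ {i} ∈ A := by
        have := hUC _ hS _ h2
        have he : S ∪ (T ∪ {i}) = (S ∪ T) ∪ {i} := by
          ext a; simp [or_comm, or_assoc, or_left_comm]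
        rwa [he] at this
      refine Finset.mem_image.2 ⟨(S ∪ T) ∪ {i}, h3, ?_⟩
      rw [if_pos (by simpa [Finset.union_assoc] using h3)]
      ext a; simp [or_comm, or_assoc, or_left_comm]
    · -- both changed
      by_cases h3 : (S ∪ T) ∪ {i} ∈ A
      · refine Finset.mem_image.2 ⟨(S ∪ T) ∪ {i}, h3, ?_⟩
        rw [if_pos (by simpa [Finset.union_assoc] using h3)]
        ext a; simp [or_comm, or_assoc, or_left_comm]
      · refine Finset.mem_image.2 ⟨S ∪ T, hST, ?_⟩
        simp only [u, if_neg h3]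
        ext a; simp [or_comm, or_assoc, or_left_comm]
  · apply Finset.card_image_of_injOn
    intro S hS T hT h
    simp only [u] at h
    split_ifs at h with h1 h2 h2
    · exact h
    · exfalso; apply h2
      subst h
      simpa [Finset.union_assoc] using h1
    · exfalso; apply h1
      rw [h]; exact hT
    · have hiS : i ∉ S := fun hi =>
        h1 (by rwa [Finset.union_eq_left.2 (Finset.singleton_subset_iff.2 hi)])
      have hiT : i ∉ T := fun hi =>
        h2 (by rwa [Finset.union_eq_left.2 (Finset.singleton_subset_iff.2 hi)])
      ext a
      constructor
      · intro ha
        have : a ∈ T ∪ {i} := h ▸ Finset.mem_union_left _ ha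
        rcases Finset.mem_union.1 this with h' | h'
        · exact h'
        · exact absurd (Finset.mem_singleton.1 h' ▸ ha) hiS
      · intro ha
        have : a ∈ S ∪ {i} := h ▸ Finset.mem_union_left _ ha
        rcases Finset.mem_union.1 this with h' | h'
        · exact h'
        · exact absurd (Finset.mem_singleton.1 h' ▸ ha) hiT
end

section
/- Let 𝒰 be an up-set of subsets of an m-element set U (i.e., X ∈ 𝒰 and X ⊆ Y ⊆ U implies Y ∈ 𝒰). Then 2·Σ_{S∈𝒰} |S| = m·|𝒰| + |EB(𝒰)|, where EB(𝒰) = {(S, S∪{i}) : S ∉ 𝒰, i ∈ U, S∪{i} ∈ 𝒰} is the edge boundary of 𝒰. -/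
open Finset

theorem upset_edge_boundary {α : Type*} [DecidableEq α] [Fintype α]
    (U : Finset (Finset α))
    (hup : ∀ X ∈ U, ∀ Y : Finset α, X ⊆ Y → Y ∈ U) :
    2 * ∑ S ∈ U, S.card =
      Fintype.card α * U.card +
      ((Finset.univ : Finset (Finset α × Finset α)).filter
        (fun p => p.1 ∉ U ∧ p.2 ∈ U ∧ ∃ i : α, p.2 = insert i p.1)).card := by
  classical
  set EB := ((Finset.univ : Finset (Finset α × Finset α)).filter
        (fun p => p.1 ∉ U ∧ p.2 ∈ U ∧ ∃ i : α, p.2 = insert i p.1)) with hEBdef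
  set D : Finset (Finset α × α) := (U ×ˢ univ).filter (fun p => p.2 ∈ p.1) with hDdef
  set Up : Finset (Finset α × α) := (U ×ˢ univ).filter (fun p => ¬ p.2 ∈ p.1) with hUpdef
  set W : Finset (Finset α × α) :=
    univ.filter (fun p => p.2 ∉ p.1 ∧ insert p.2 p.1 ∈ U) with hWdef
  set B : Finset (Finset α × α) :=
    univ.filter (fun p => p.1 ∉ U ∧ p.2 ∉ p.1 ∧ insert p.2 p.1 ∈ U) with hBdef
  have hD : D.card = ∑ S ∈ U, S.card := by
    rw [hDdef, card_filter, sum_product]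
    refine Finset.sum_congr rfl fun S _ => ?_
    simp [Finset.card_filter]
  have hDUp : D.card + Up.card = U.card * Fintype.card α := by
    rw [hDdef, hUpdef, card_filter_add_card_filter_not, card_product, card_univ]
  have hDW : D.card = W.card := by
    apply Finset.card_nbij' (fun p => (p.1.erase p.2, p.2)) (fun p => (insert p.2 p.1, p.2))
    · intro p hp
      rw [hDdef, mem_coe, mem_filter, mem_product] at hp
      rw [hWdef, mem_coe, mem_filter]
      refine ⟨mem_univ _, Finset.notMem_erase _ _, ?_⟩
      rw [Finset.insert_erase hp.2]
      exact hp.1.1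
    · intro p hp
      rw [hWdef, mem_coe, mem_filter] at hp
      rw [hDdef, mem_coe, mem_filter, mem_product]
      exact ⟨⟨hp.2.2, mem_univ _⟩, Finset.mem_insert_self _ _⟩
    · intro p hp
      rw [hDdef, mem_coe, mem_filter] at hp
      simp [Finset.insert_erase hp.2]
    · intro p hp
      rw [hWdef, mem_coe, mem_filter] at hp
      simp [Finset.erase_insert hp.2.1]
  have hWUp : W.filter (fun p => p.1 ∈ U) = Up := by
    ext p
    rw [hWdef, hUpdef, mem_filter, mem_filter, mem_filter, mem_product]
    constructor
    · rintro ⟨⟨_, h1, _⟩, h2⟩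
      exact ⟨⟨h2, mem_univ _⟩, h1⟩
    · rintro ⟨⟨h1, _⟩, h2⟩
      exact ⟨⟨mem_univ _, h2, hup _ h1 _ (Finset.subset_insert _ _)⟩, h1⟩
  have hWB : W.filter (fun p => ¬ p.1 ∈ U) = B := by
    ext p
    rw [hWdef, hBdef, mem_filter, mem_filter, mem_filter]
    tauto
  have hW : Up.card + B.card = W.card := by
    rw [← hWUp, ← hWB, card_filter_add_card_filter_not]
  have hB : B.card = EB.card := by
    apply Finset.card_bij (fun p _ => (p.1, insert p.2 p.1))
    · intro p hp
      rw [hBdef, mem_filter] at hp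
      rw [hEBdef, mem_filter]
      exact ⟨mem_univ _, hp.2.1, hp.2.2.2, p.2, rfl⟩
    · intro p hp q hq h
      rw [hBdef, mem_filter] at hp hq
      rw [Prod.mk.injEq] at h
      obtain ⟨h1, h2⟩ := h
      have : p.2 ∈ insert q.2 q.1 := by rw [← h2]; exact Finset.mem_insert_self _ _
      rw [Finset.mem_insert] at this
      rcases this with h | h
      · exact Prod.ext h1 h
      · exact absurd (h1 ▸ h) hp.2.2.1
    · intro q hq
      rw [hEBdef, mem_filter] at hq
      obtain ⟨-, h1, h2, i, hi⟩ := hq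
      have hiq : i ∉ q.1 := by
        intro hmem
        rw [hi, Finset.insert_eq_self.2 hmem] at h2
        exact h1 h2
      refine ⟨(q.1, i), ?_, ?_⟩
      · rw [hBdef, mem_filter]
        exact ⟨mem_univ _, h1, hiq, hi ▸ h2⟩
      · exact Prod.ext rfl hi.symm
  have : 2 * ∑ S ∈ U, S.card = D.card + D.card := by rw [hD]; ring
  rw [Nat.mul_comm] at hDUp
  rw [this, hDW, ← hW]
  omega
end

section
/- Let A be a union-closed family of subsets of a finite set U, and suppose an element y is dominated by an element x (i.e., every member-set containing y also contains x). Define u'_y(S) = S ∪ {y} if x ∈ S and S ∪ {y} ∉ A, and u'_y(S) = S otherwise. Then the family A' = {u'_y(S) : S ∈ A} is union-closed, |A'| = |A|, the frequency of x in A' equals the frequency of x in A, and the frequency of y in A' is at most the frequency of x in A'. -/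
theorem restricted_up_compression {α : Type*} [DecidableEq α]
    (A : Finset (Finset α))
    (hUC : ∀ B ∈ A, ∀ C ∈ A, B ∪ C ∈ A)
    (x y : α)
    (hdom : ∀ S ∈ A, y ∈ S → x ∈ S) :
    let u := fun S : Finset α =>
      if x ∈ S ∧ S ∪ {y} ∉ A then S ∪ {y} else S
    let A' := A.image u
    (∀ B ∈ A', ∀ C ∈ A', B ∪ C ∈ A') ∧
    A'.card = A.card ∧
    (A'.filter (fun S => x ∈ S)).card = (A.filter (fun S => x ∈ S)).card ∧
    (A'.filter (fun S => y ∈ S)).card ≤ (A'.filter (fun S => x ∈ S)).card := by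
  intro u A'
  have hkey : ∀ S ∈ A, (u S = S ∧ (x ∈ S → S ∪ {y} ∈ A)) ∨
      (u S = S ∪ {y} ∧ x ∈ S ∧ S ∪ {y} ∉ A ∧ y ∉ S) := by
    intro S hS
    by_cases h : x ∈ S ∧ S ∪ {y} ∉ A
    · refine Or.inr ⟨if_pos h, h.1, h.2, fun hy => h.2 ?_⟩
      have : S ∪ {y} = S := by
        apply Finset.union_eq_left.mpr; simpa using hy
      rwa [this]
    · refine Or.inl ⟨if_neg h, fun hx => ?_⟩
      by_contra hne
      exact h ⟨hx, hne⟩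
  have hxmem : ∀ S : Finset α, x ∈ u S ↔ x ∈ S := by
    intro S
    show x ∈ (if x ∈ S ∧ S ∪ {y} ∉ A then S ∪ {y} else S) ↔ x ∈ S
    split
    case isTrue h => simp [h.1]
    case isFalse h => rfl
  have hinj : Set.InjOn u A := by
    intro S hS T hT hST
    rcases hkey S hS with ⟨hS1, _⟩ | ⟨hS1, hxS, hSA, hyS⟩ <;>
      rcases hkey T hT with ⟨hT1, _⟩ | ⟨hT1, hxT, hTA, hyT⟩
    · rw [hS1, hT1] at hST; exact hST
    · rw [hS1, hT1] at hST; exact absurd (hST ▸ hS) hTA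
    · rw [hS1, hT1] at hST; exact absurd (hST.symm ▸ hT) hSA
    · rw [hS1, hT1] at hST
      ext a
      by_cases hay : a = y
      · subst hay; simp [hyS, hyT]
      · have := Finset.ext_iff.mp hST a
        simpa [Finset.mem_union, hay] using this
  have hdom' : ∀ S ∈ A', y ∈ S → x ∈ S := by
    intro S hS hy
    obtain ⟨T, hT, rfl⟩ := Finset.mem_image.mp hS
    rcases hkey T hT with ⟨hT1, _⟩ | ⟨hT1, hxT, _, _⟩
    · rw [hT1] at hy ⊢; exact hdom T hT hy
    · rw [hT1]; simp [hxT]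
  refine ⟨?_, ?_, ?_, ?_⟩
  · -- union closed
    intro B hB C hC
    obtain ⟨S, hS, rfl⟩ := Finset.mem_image.mp hB
    obtain ⟨T, hT, rfl⟩ := Finset.mem_image.mp hC
    have hV : S ∪ T ∈ A := hUC S hS T hT
    -- helper: if x ∈ S ∪ T then (S ∪ T) ∪ {y} ∈ A'
    have hVy : x ∈ S ∪ T → (S ∪ T) ∪ {y} ∈ A' := by
      intro hxV
      by_cases hmem : (S ∪ T) ∪ {y} ∈ A
      · refine Finset.mem_image.mpr ⟨(S ∪ T) ∪ {y}, hmem, ?_⟩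
        have : ((S ∪ T) ∪ {y}) ∪ {y} = (S ∪ T) ∪ {y} := by
          rw [Finset.union_assoc, Finset.union_self]
        show (if _ ∧ _ then _ else _) = _
        rw [if_neg]
        push_neg
        intro _
        rwa [this]
      · refine Finset.mem_image.mpr ⟨S ∪ T, hV, ?_⟩
        show (if _ ∧ _ then _ else _) = _
        rw [if_pos ⟨hxV, hmem⟩]
    rcases hkey S hS with ⟨hS1, hS2⟩ | ⟨hS1, hxS, hSA, _⟩
    · rcases hkey T hT with ⟨hT1, hT2⟩ | ⟨hT1, hxT, hTA, _⟩
      · rw [hS1, hT1]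
        by_cases hc : x ∈ S ∪ T ∧ (S ∪ T) ∪ {y} ∉ A
        · exfalso
          rcases Finset.mem_union.mp hc.1 with hx' | hx'
          · have h1 : S ∪ {y} ∈ A := hS2 hx'
            have h2 : (S ∪ {y}) ∪ T ∈ A := hUC _ h1 T hT
            apply hc.2
            rwa [Finset.union_right_comm] at h2
          · have h1 : T ∪ {y} ∈ A := hT2 hx'
            have h2 : S ∪ (T ∪ {y}) ∈ A := hUC S hS _ h1
            apply hc.2
            rwa [← Finset.union_assoc] at h2
        · refine Finset.mem_image.mpr ⟨S ∪ T, hV, ?_⟩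
          show (if _ ∧ _ then _ else _) = _
          rw [if_neg hc]
      · rw [hS1, hT1]
        have heq : S ∪ (T ∪ {y}) = (S ∪ T) ∪ {y} := by
          rw [Finset.union_assoc]
        rw [heq]
        exact hVy (Finset.mem_union_right _ hxT)
    · rw [hS1]
      have hsub : u T ⊆ T ∪ {y} := by
        rcases hkey T hT with ⟨hT1, _⟩ | ⟨hT1, _, _, _⟩
        · rw [hT1]; exact Finset.subset_union_left
        · rw [hT1]
      have hsub2 : T ⊆ u T := by
        rcases hkey T hT with ⟨hT1, _⟩ | ⟨hT1, _, _, _⟩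
        · rw [hT1]
        · rw [hT1]; exact Finset.subset_union_left
      have heq : (S ∪ {y}) ∪ u T = (S ∪ T) ∪ {y} := by
        apply Finset.Subset.antisymm
        · intro a ha
          rcases Finset.mem_union.mp ha with ha | ha
          · rcases Finset.mem_union.mp ha with ha | ha
            · exact Finset.mem_union_left _ (Finset.mem_union_left _ ha)
            · exact Finset.mem_union_right _ ha
          · rcases Finset.mem_union.mp (hsub ha) with ha | ha
            · exact Finset.mem_union_left _ (Finset.mem_union_right _ ha)
            · exact Finset.mem_union_right _ ha
        · intro a ha
          rcases Finset.mem_union.mp ha with ha | ha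
          · rcases Finset.mem_union.mp ha with ha | ha
            · exact Finset.mem_union_left _ (Finset.mem_union_left _ ha)
            · exact Finset.mem_union_right _ (hsub2 ha)
          · exact Finset.mem_union_left _ (Finset.mem_union_right _ ha)
      rw [heq]
      exact hVy (Finset.mem_union_left _ hxS)
  · exact Finset.card_image_of_injOn hinj
  · -- x frequency
    have hfe : A'.filter (fun S => x ∈ S) = (A.filter (fun S => x ∈ S)).image u := by
      show (A.image u).filter _ = _
      rw [Finset.filter_image]
      congr 1
      ext S
      simp [hxmem]
    rw [hfe]
    refine Finset.card_image_of_injOn (hinj.mono ?_)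
    intro S hS
    simp only [Finset.coe_filter, Set.mem_setOf_eq] at hS
    exact hS.1
  · apply Finset.card_le_card
    intro S hS
    rw [Finset.mem_filter] at hS ⊢
    exact ⟨hS.1, hdom' S hS.1 hS.2⟩
end

section
/- If every union-closed family with an odd number n of member-sets has an element contained in at least n/2 of its member-sets, then every union-closed family with n+1 member-sets has an element contained in at least (n+1)/2 of its member-sets. -/
theorem odd_implies_even_case (n : ℕ) (hodd : Odd n)
    (H : ∀ A : Finset (Finset ℕ),
      (∀ B ∈ A, ∀ C ∈ A, B ∪ C ∈ A) → A.card = n →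
      ∃ x : ℕ, 2 * (A.filter (fun S => x ∈ S)).card ≥ A.card) :
    ∀ A : Finset (Finset ℕ),
      (∀ B ∈ A, ∀ C ∈ A, B ∪ C ∈ A) → A.card = n + 1 →
      ∃ x : ℕ, 2 * (A.filter (fun S => x ∈ S)).card ≥ A.card := by
  intro A hUC hcard
  have hne : A.Nonempty := Finset.card_pos.mp (by omega)
  obtain ⟨S, hS, hmin⟩ := A.exists_min_image Finset.card hne
  set A' := A.erase S with hA'
  have hcard' : A'.card = n := by
    rw [hA', Finset.card_erase_of_mem hS, hcard]
    omega
  have hUC' : ∀ B ∈ A', ∀ C ∈ A', B ∪ C ∈ A' := by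
    intro B hB C hC
    have hBA : B ∈ A := Finset.mem_of_mem_erase hB
    have hCA : C ∈ A := Finset.mem_of_mem_erase hC
    have hU : B ∪ C ∈ A := hUC B hBA C hCA
    refine Finset.mem_erase.mpr ⟨?_, hU⟩
    intro hEq
    have hBsub : B ⊆ S := hEq ▸ Finset.subset_union_left
    have : B = S := Finset.eq_of_subset_of_card_le hBsub (hmin B hBA)
    exact (Finset.mem_erase.mp hB).1 this
  obtain ⟨x, hx⟩ := H A' hUC' hcard'
  refine ⟨x, ?_⟩
  have hsub : A'.filter (fun T => x ∈ T) ⊆ A.filter (fun T => x ∈ T) := by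
    apply Finset.filter_subset_filter
    exact Finset.erase_subset _ _
  have hle := Finset.card_le_card hsub
  rw [hcard'] at hx
  have hno : n % 2 = 1 := Nat.odd_iff.mp hodd
  rw [hcard]
  omega
end

section
/- Let φ(A) denote the maximum frequency of an element in a finite union-closed family A, and let φ(n) be the minimum of φ(A) over all union-closed families A with exactly n member-sets (n ≥ 2). Then φ(n−1) ≤ φ(n) ≤ φ(n−1) + 1 for all n ≥ 3. -/
/-- Maximum frequency of an element of the universe of a family. -/
def maxFreq (A : Finset (Finset ℕ)) : ℕ :=
  (A.biUnion id).sup (fun u => (A.filter (fun S => u ∈ S)).card)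

/-- Minimum of the maximum frequency over union-closed families with `n` member-sets. -/
noncomputable def phi (n : ℕ) : ℕ :=
  sInf {k : ℕ | ∃ A : Finset (Finset ℕ),
    (∀ B ∈ A, ∀ C ∈ A, B ∪ C ∈ A) ∧ A.card = n ∧ maxFreq A = k}

lemma maxFreq_mono {A B : Finset (Finset ℕ)} (h : A ⊆ B) : maxFreq A ≤ maxFreq B := by
  unfold maxFreq
  apply Finset.sup_le
  intro u hu
  calc (A.filter (fun S => u ∈ S)).card
      ≤ (B.filter (fun S => u ∈ S)).card :=
        Finset.card_le_card (Finset.filter_subset_filter _ h)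
    _ ≤ maxFreq B :=
        Finset.le_sup (f := fun u => (B.filter (fun S => u ∈ S)).card)
          (Finset.biUnion_subset_biUnion_of_subset_left id h hu)

lemma phiSet_nonempty (n : ℕ) :
    {k : ℕ | ∃ A : Finset (Finset ℕ),
      (∀ B ∈ A, ∀ C ∈ A, B ∪ C ∈ A) ∧ A.card = n ∧ maxFreq A = k}.Nonempty := by
  set A : Finset (Finset ℕ) := (Finset.range n).image (fun i => Finset.range (i + 1)) with hA
  refine ⟨maxFreq A, A, ?_, ?_, rfl⟩
  · intro B hB C hC
    rw [hA, Finset.mem_image] at hB hC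
    obtain ⟨i, hi, rfl⟩ := hB
    obtain ⟨j, hj, rfl⟩ := hC
    rw [hA, Finset.mem_image]
    refine ⟨max i j, ?_, ?_⟩
    · simp only [Finset.mem_range] at hi hj ⊢; omega
    · ext a; simp only [Finset.mem_union, Finset.mem_range]; omega
  · rw [hA, Finset.card_image_of_injective, Finset.card_range]
    intro i j hij
    have := congrArg Finset.card hij
    simpa using this

theorem renaud_phi_monotone (n : ℕ) (hn : 3 ≤ n) :
    phi (n - 1) ≤ phi n ∧ phi n ≤ phi (n - 1) + 1 := by
  constructor
  · -- phi (n-1) ≤ phi n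
    obtain ⟨A, hUC, hcard, hmax⟩ := Nat.sInf_mem (phiSet_nonempty n)
    have hAne : A.Nonempty := Finset.card_pos.mp (by omega)
    obtain ⟨m, hm, hmin⟩ := Finset.exists_min_image A Finset.card hAne
    have hUC' : ∀ B ∈ A.erase m, ∀ C ∈ A.erase m, B ∪ C ∈ A.erase m := by
      intro B hB C hC
      have hB' := Finset.mem_of_mem_erase hB
      have hC' := Finset.mem_of_mem_erase hC
      have hBC : B ∪ C ∈ A := hUC B hB' C hC'
      refine Finset.mem_erase.mpr ⟨?_, hBC⟩
      intro hEq
      have hBm : B ⊆ m := hEq ▸ Finset.subset_union_left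
      have hBne : B ≠ m := (Finset.mem_erase.mp hB).1
      have h2 : m.card ≤ B.card := hmin B hB'
      exact hBne (Finset.eq_of_subset_of_card_le hBm h2)
    have hmem : maxFreq (A.erase m) ∈ {k : ℕ | ∃ A : Finset (Finset ℕ),
        (∀ B ∈ A, ∀ C ∈ A, B ∪ C ∈ A) ∧ A.card = n - 1 ∧ maxFreq A = k} :=
      ⟨A.erase m, hUC', by rw [Finset.card_erase_of_mem hm, hcard], rfl⟩
    calc phi (n - 1) ≤ maxFreq (A.erase m) := Nat.sInf_le hmem
      _ ≤ maxFreq A := maxFreq_mono (Finset.erase_subset _ _)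
      _ = phi n := hmax
  · -- phi n ≤ phi (n-1) + 1
    obtain ⟨A, hUC, hcard, hmax⟩ := Nat.sInf_mem (phiSet_nonempty (n - 1))
    set U : Finset ℕ := A.biUnion id with hU
    set x : ℕ := U.sup id + 1 with hx
    have hxU : x ∉ U := by
      intro h
      have := Finset.le_sup (f := id) h
      simp only [id] at this
      omega
    set S : Finset ℕ := insert x U with hS
    have hsubU : ∀ B ∈ A, B ⊆ U := by
      intro B hB b hb
      exact Finset.mem_biUnion.mpr ⟨B, hB, hb⟩
    have hSA : S ∉ A := by
      intro h
      exact hxU (hsubU S h (Finset.mem_insert_self _ _))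
    have hUC'' : ∀ B ∈ insert S A, ∀ C ∈ insert S A, B ∪ C ∈ insert S A := by
      intro B hB C hC
      rcases Finset.mem_insert.mp hB with hBS | hB' <;>
        rcases Finset.mem_insert.mp hC with hCS | hC'
      · subst hBS; subst hCS
        simp only [Finset.union_self]; exact Finset.mem_insert_self S A
      · subst hBS
        have h : S ∪ C = S := Finset.union_eq_left.mpr
          ((hsubU C hC').trans (Finset.subset_insert _ _))
        rw [h]; exact Finset.mem_insert_self _ _
      · subst hCS
        have h : B ∪ S = S := Finset.union_eq_right.mpr
          ((hsubU B hB').trans (Finset.subset_insert _ _))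
        rw [h]; exact Finset.mem_insert_self _ _
      · exact Finset.mem_insert_of_mem (hUC B hB' C hC')
    have hcard'' : (insert S A).card = n := by
      rw [Finset.card_insert_of_notMem hSA, hcard]; omega
    have hbound : maxFreq (insert S A) ≤ maxFreq A + 1 := by
      apply Finset.sup_le
      intro u hu
      have hsub : (insert S A).filter (fun T => u ∈ T) ⊆
          insert S (A.filter (fun T => u ∈ T)) := by
        intro T hT
        simp only [Finset.mem_filter, Finset.mem_insert] at hT ⊢
        tauto
      have h1 : ((insert S A).filter (fun T => u ∈ T)).card ≤
          (A.filter (fun T => u ∈ T)).card + 1 :=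
        le_trans (Finset.card_le_card hsub) (Finset.card_insert_le _ _)
      have h2 : (A.filter (fun T => u ∈ T)).card ≤ maxFreq A := by
        rcases (A.filter (fun T => u ∈ T)).eq_empty_or_nonempty with he | ⟨T, hT⟩
        · simp [he]
        · have hT' := Finset.mem_filter.mp hT
          exact Finset.le_sup (f := fun u => (A.filter (fun T => u ∈ T)).card)
            (Finset.mem_biUnion.mpr ⟨T, hT'.1, (by simpa using hT'.2 : u ∈ id T)⟩)
      omega
    have hmem : maxFreq (insert S A) ∈ {k : ℕ | ∃ A : Finset (Finset ℕ),
        (∀ B ∈ A, ∀ C ∈ A, B ∪ C ∈ A) ∧ A.card = n ∧ maxFreq A = k} :=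
      ⟨insert S A, hUC'', hcard'', rfl⟩
    calc phi n ≤ maxFreq (insert S A) := Nat.sInf_le hmem
      _ ≤ maxFreq A + 1 := hbound
      _ = phi (n - 1) + 1 := by rw [hmax]; rfl
end

section
/- For every t ≥ 1, let V be a set of size 2t disjoint from W = {w₁, ..., w_{2^t}}, and let A = 2^V ∪ {V ∪ {w₁,...,w_i} : 1 ≤ i ≤ 2^t}. Then A is a union-closed separating family with |A| = 2^{2t} + 2^t, and the average normalized frequency (1/|U|)·Σ_{u∈U} |A_u|/|A|, where U = V ∪ W, tends to 0 as t → ∞. -/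
open Finset

/-- The Duffus–Sands family: the power set of `V = {0, …, 2t-1}` together with the
sets `V ∪ {w₁, …, w_i}` where `w_j = 2t + (j-1)` for `1 ≤ i ≤ 2^t`. -/
def dsFam (t : ℕ) : Finset (Finset ℕ) :=
  (Finset.range (2 * t)).powerset ∪
    (Finset.range (2 ^ t)).image
      (fun i => Finset.range (2 * t) ∪ (Finset.range (i + 1)).image (fun j => 2 * t + j))

/-- The universe of the Duffus–Sands family. -/
def dsUniv (t : ℕ) : Finset ℕ := (dsFam t).biUnion id
open Finset

lemma dsSet_eq (t i : ℕ) :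
    Finset.range (2*t) ∪ (Finset.range (i+1)).image (fun j => 2*t + j)
      = Finset.range (2*t + i + 1) := by
  ext x
  simp only [mem_union, mem_image, mem_range]
  constructor
  · rintro (h | ⟨j, hj, rfl⟩) <;> omega
  · intro h
    rcases lt_or_ge x (2*t) with h' | h'
    · exact Or.inl h'
    · exact Or.inr ⟨x - 2*t, by omega, by omega⟩

lemma dsFam_eq (t : ℕ) :
    dsFam t = (Finset.range (2*t)).powerset ∪
      (Finset.range (2^t)).image (fun i => Finset.range (2*t + i + 1)) := by
  unfold dsFam
  congr 1
  apply image_congr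
  intro i _
  exact dsSet_eq t i

lemma mem_dsFam {t : ℕ} {S : Finset ℕ} :
    S ∈ dsFam t ↔ S ⊆ Finset.range (2*t) ∨ ∃ i < 2^t, S = Finset.range (2*t + i + 1) := by
  rw [dsFam_eq]
  simp only [mem_union, mem_powerset, mem_image, mem_range]
  constructor
  · rintro (h | ⟨i, hi, rfl⟩)
    · exact Or.inl h
    · exact Or.inr ⟨i, hi, rfl⟩
  · rintro (h | ⟨i, hi, rfl⟩)
    · exact Or.inl h
    · exact Or.inr ⟨i, hi, rfl⟩

lemma dsUniv_eq (t : ℕ) : dsUniv t = Finset.range (2*t + 2^t) := by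
  have h1 : (1:ℕ) ≤ 2^t := Nat.one_le_two_pow
  apply subset_antisymm
  · intro x hx
    simp only [dsUniv, mem_biUnion, id] at hx
    obtain ⟨S, hS, hx⟩ := hx
    rcases mem_dsFam.1 hS with h | ⟨i, hi, rfl⟩
    · have := h hx; simp only [mem_range] at this ⊢; omega
    · simp only [mem_range] at hx ⊢; omega
  · intro x hx
    simp only [mem_range] at hx
    simp only [dsUniv, mem_biUnion, id]
    refine ⟨Finset.range (2*t + (2^t - 1) + 1), mem_dsFam.2 (Or.inr ⟨2^t - 1, by omega, rfl⟩), ?_⟩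
    simp only [mem_range]; omega

lemma dsFam_union_closed (t : ℕ) : ∀ B ∈ dsFam t, ∀ C ∈ dsFam t, B ∪ C ∈ dsFam t := by
  intro B hB C hC
  rcases mem_dsFam.1 hB with hB' | ⟨i, hi, rfl⟩
  · rcases mem_dsFam.1 hC with hC' | ⟨i, hi, rfl⟩
    · exact mem_dsFam.2 (Or.inl (union_subset hB' hC'))
    · refine mem_dsFam.2 (Or.inr ⟨i, hi, ?_⟩)
      rw [union_eq_right.2 (hB'.trans (range_subset_range.2 (by omega)))]
  · rcases mem_dsFam.1 hC with hC' | ⟨i', hi', rfl⟩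
    · refine mem_dsFam.2 (Or.inr ⟨i, hi, ?_⟩)
      rw [union_eq_left.2 (hC'.trans (range_subset_range.2 (by omega)))]
    · refine mem_dsFam.2 (Or.inr ⟨max i i', by omega, ?_⟩)
      ext x
      simp only [mem_union, mem_range]
      omega

lemma dsFam_card (t : ℕ) : (dsFam t).card = 2 ^ (2*t) + 2^t := by
  rw [dsFam_eq, card_union_of_disjoint, card_powerset, card_range, card_image_of_injOn, card_range]
  · intro i _ i' _ h
    have := congrArg Finset.card h
    simp only [card_range] at this
    omega
  · rw [disjoint_left]
    intro S hS hS'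
    simp only [mem_powerset] at hS
    simp only [mem_image, mem_range] at hS'
    obtain ⟨i, hi, rfl⟩ := hS'
    have : 2*t ∈ Finset.range (2*t + i + 1) := by simp only [mem_range]; omega
    have := hS this
    simp only [mem_range] at this
    omega

lemma dsFam_separating (t : ℕ) : ∀ x ∈ dsUniv t, ∀ y ∈ dsUniv t, x ≠ y →
    ∃ S ∈ dsFam t, (x ∈ S ∧ y ∉ S) ∨ (x ∉ S ∧ y ∈ S) := by
  intro x hx y hy hxy
  rw [dsUniv_eq, mem_range] at hx hy
  rcases lt_or_ge x (2*t) with h | h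
  · exact ⟨{x}, mem_dsFam.2 (Or.inl (by simp only [singleton_subset_iff, mem_range]; omega)),
      Or.inl ⟨mem_singleton_self x, by simp only [mem_singleton]; omega⟩⟩
  rcases lt_or_ge y (2*t) with h' | h'
  · exact ⟨{y}, mem_dsFam.2 (Or.inl (by simp only [singleton_subset_iff, mem_range]; omega)),
      Or.inr ⟨by simp only [mem_singleton]; omega, mem_singleton_self y⟩⟩
  rcases lt_or_ge x y with h'' | h''
  · refine ⟨Finset.range (2*t + (x - 2*t) + 1), mem_dsFam.2 (Or.inr ⟨x - 2*t, by omega, rfl⟩),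
      Or.inl ⟨?_, ?_⟩⟩ <;> simp only [mem_range] <;> omega
  · refine ⟨Finset.range (2*t + (y - 2*t) + 1), mem_dsFam.2 (Or.inr ⟨y - 2*t, by omega, rfl⟩),
      Or.inr ⟨?_, ?_⟩⟩ <;> simp only [mem_range] <;> omega

lemma filter_powerset_card_le {n u : ℕ} (hu : u < n) :
    ((Finset.range n).powerset.filter (fun S => u ∈ S)).card ≤ 2^(n-1) := by
  have h : ((Finset.range n).powerset.filter (fun S => u ∈ S)).card
      ≤ ((Finset.range n).erase u).powerset.card := by
    apply Finset.card_le_card_of_injOn (fun S => S.erase u)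
    · intro S hS
      simp only [mem_coe, mem_filter, mem_powerset] at hS
      exact mem_powerset.2 (erase_subset_erase u hS.1)
    · intro S hS S' hS' h
      simp only [coe_filter, mem_powerset, Set.mem_setOf_eq] at hS hS'
      rw [← insert_erase hS.2, ← insert_erase hS'.2]
      exact congrArg (insert u) h
  rwa [card_powerset, card_erase_of_mem (mem_range.2 hu), card_range] at h

lemma dsFam_filter_le_lt (t u : ℕ) (hu : u < 2*t) :
    ((dsFam t).filter (fun S => u ∈ S)).card ≤ 2^(2*t-1) + 2^t := by
  rw [dsFam_eq, filter_union]
  refine le_trans (card_union_le _ _) (add_le_add (filter_powerset_card_le hu) ?_)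
  exact le_trans (card_le_card (filter_subset _ _))
    (le_trans card_image_le (le_of_eq (card_range _)))

lemma dsFam_filter_le_ge (t u : ℕ) (hu : 2*t ≤ u) :
    ((dsFam t).filter (fun S => u ∈ S)).card ≤ 2^t := by
  rw [dsFam_eq, filter_union]
  refine le_trans (card_union_le _ _) ?_
  have h0 : ((Finset.range (2*t)).powerset.filter (fun S => u ∈ S)) = ∅ := by
    rw [filter_eq_empty_iff]
    intro S hS hu'
    have := mem_powerset.1 hS hu'
    rw [mem_range] at this; omega
  rw [h0, card_empty, zero_add]
  exact le_trans (card_le_card (filter_subset _ _))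
    (le_trans card_image_le (le_of_eq (card_range _)))

lemma dsSum_le (t : ℕ) (ht : 1 ≤ t) :
    ∑ u ∈ Finset.range (2*t + 2^t), ((dsFam t).filter (fun S => u ∈ S)).card
      ≤ 4 * t * 2^(2*t) := by
  rw [range_eq_Ico,
    ← Finset.sum_Ico_consecutive _ (Nat.zero_le (2*t)) (Nat.le_add_right (2*t) (2^t))]
  have h1 : ∑ u ∈ Finset.Ico 0 (2*t), ((dsFam t).filter (fun S => u ∈ S)).card
      ≤ 2*t * (2^(2*t-1) + 2^t) := by
    refine le_trans (Finset.sum_le_card_nsmul _ _ (2^(2*t-1) + 2^t) ?_) ?_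
    · intro u hu
      rw [Finset.mem_Ico] at hu
      exact dsFam_filter_le_lt t u hu.2
    · rw [Nat.card_Ico, smul_eq_mul, Nat.sub_zero]
  have h2 : ∑ u ∈ Finset.Ico (2*t) (2*t + 2^t), ((dsFam t).filter (fun S => u ∈ S)).card
      ≤ 2^t * 2^t := by
    refine le_trans (Finset.sum_le_card_nsmul _ _ (2^t) ?_) ?_
    · intro u hu
      rw [Finset.mem_Ico] at hu
      exact dsFam_filter_le_ge t u hu.1
    · rw [Nat.card_Ico, smul_eq_mul, Nat.add_sub_cancel_left]
  have e1 : 2 * 2^(2*t-1) = 2^(2*t) := by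
    rw [← pow_succ']
    congr 1
    omega
  have e2 : 2^t * 2^t = 2^(2*t) := by
    rw [← pow_add]
    congr 1
    omega
  have e3 : 2^t ≤ 2^(2*t) := Nat.pow_le_pow_right (by norm_num) (by omega)
  calc ∑ u ∈ Finset.Ico 0 (2*t), ((dsFam t).filter (fun S => u ∈ S)).card
        + ∑ u ∈ Finset.Ico (2*t) (2*t + 2^t), ((dsFam t).filter (fun S => u ∈ S)).card
      ≤ 2*t * (2^(2*t-1) + 2^t) + 2^t * 2^t := add_le_add h1 h2
    _ ≤ 4 * t * 2^(2*t) := by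
        have f1 : 2*t*2^t ≤ 2*t*2^(2*t) := Nat.mul_le_mul_left _ e3
        have f2 : 2^(2*t) ≤ t * 2^(2*t) := Nat.le_mul_of_pos_left _ ht
        nlinarith [e1, e2, f1, f2]

theorem duffus_sands_low_average :
    (∀ t : ℕ, 1 ≤ t →
      (∀ B ∈ dsFam t, ∀ C ∈ dsFam t, B ∪ C ∈ dsFam t) ∧
      (∀ x ∈ dsUniv t, ∀ y ∈ dsUniv t, x ≠ y →
        ∃ S ∈ dsFam t, (x ∈ S ∧ y ∉ S) ∨ (x ∉ S ∧ y ∈ S)) ∧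
      (dsFam t).card = 2 ^ (2 * t) + 2 ^ t) ∧
    Filter.Tendsto
      (fun t : ℕ =>
        (1 / ((dsUniv t).card : ℝ)) *
          ∑ u ∈ dsUniv t,
            (((dsFam t).filter (fun S => u ∈ S)).card : ℝ) / ((dsFam t).card : ℝ))
      Filter.atTop (nhds 0) := by
  refine ⟨fun t ht => ⟨dsFam_union_closed t, dsFam_separating t, dsFam_card t⟩, ?_⟩
  have hg : Filter.Tendsto (fun t : ℕ => 4 * (t : ℝ) / 2^t) Filter.atTop (nhds 0) := by
    have h := (tendsto_self_mul_const_pow_of_lt_one (r := (1:ℝ)/2) (by norm_num)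
      (by norm_num)).const_mul 4
    rw [mul_zero] at h
    refine h.congr fun t => ?_
    rw [div_pow, one_pow, mul_one_div, ← mul_div_assoc]
  refine squeeze_zero' (Filter.Eventually.of_forall fun t => ?_) ?_ hg
  · positivity
  · filter_upwards [Filter.eventually_ge_atTop 1] with t ht
    rw [dsUniv_eq, card_range]
    set N : ℕ := ∑ u ∈ Finset.range (2*t + 2^t), ((dsFam t).filter (fun S => u ∈ S)).card with hN
    have hsum : ∑ u ∈ Finset.range (2*t + 2^t),
        (((dsFam t).filter (fun S => u ∈ S)).card : ℝ) / ((dsFam t).card : ℝ)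
        = (N : ℝ) / ((dsFam t).card : ℝ) := by
      rw [← Finset.sum_div, hN]
      push_cast
      ring
    rw [hsum, dsFam_card, one_div_mul_eq_div, div_div]
    have hnat : N * 2^t ≤ 4*t*((2^(2*t)+2^t) * (2*t+2^t)) := by
      have hA : (2^(2*t) : ℕ) ≤ 2^(2*t)+2^t := Nat.le_add_right _ _
      have hB : (2^t : ℕ) ≤ 2*t+2^t := Nat.le_add_left _ _
      calc N * 2^t ≤ 4*t*2^(2*t) * 2^t :=
            Nat.mul_le_mul_right _ (dsSum_le t ht)
        _ = 4*t*(2^(2*t)*2^t) := by ring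
        _ ≤ 4*t*((2^(2*t)+2^t) * (2*t+2^t)) :=
            Nat.mul_le_mul_left _ (Nat.mul_le_mul hA hB)
    have ha : (0:ℝ) < ((2^(2*t)+2^t : ℕ) : ℝ) := by
      exact_mod_cast (by positivity : (0:ℕ) < 2^(2*t)+2^t)
    have hb : (0:ℝ) < ((2*t+2^t : ℕ) : ℝ) := by
      exact_mod_cast (by positivity : (0:ℕ) < 2*t+2^t)
    rw [div_le_div_iff₀ (mul_pos ha hb) (by positivity)]
    have h' := (Nat.cast_le (α := ℝ)).2 hnat
    push_cast at h' ⊢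
    nlinarith [h']
end
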